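/- arXiv:1708.02317 — 7 statements merged into one kernel-verified Lean document; each statement's English description precedes it below -/
import Mathlib

section
/- Let α ∈ (0,1) and t ∈ ℕ be such that t > ((1−α)/(2α))² + 1. Then there exists a constant K (depending only on α and t) such that for every n ∈ ℕ and every spherical {−α, α}-code C_α in ℝ^n, there exists a spherical L(α,t)-code C in ℝ^n with |C_α| ≤ |C| + K. -/
open scoped Classical

/-- The adjacency matrix (over `ℝ`) of a simple graph. -/
noncomputable def adjMat {V : Type*} [Fintype V] (G : SimpleGraph V) : Matrix V V ℝ :=
  fun i j => if G.Adj i j then 1 else 0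

/-- The spectral radius of a finite simple graph: the largest eigenvalue of its
adjacency matrix. -/
noncomputable def specRad {V : Type*} [Fintype V] (G : SimpleGraph V) : ℝ :=
  sSup {μ : ℝ | ∃ v : V → ℝ, v ≠ 0 ∧ (adjMat G).mulVec v = μ • v}

/-- `Contains G H` : the graph `H` contains a copy of `G` as a subgraph. -/
def Contains {V W : Type*} (G : SimpleGraph V) (H : SimpleGraph W) : Prop :=
  ∃ f : V → W, Function.Injective f ∧ ∀ ⦃a b⦄, G.Adj a b → H.Adj (f a) (f b)

/-- `beta m` : the unique positive real root of `x^(m+1) = 1 + x + ⋯ + x^(m-1)`. -/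
noncomputable def beta (m : ℕ) : ℝ :=
  sSup {x : ℝ | 0 < x ∧ x ^ (m + 1) = ∑ i ∈ Finset.range m, x ^ i}

/-- `alpha m = beta m ^ (1/2) + beta m ^ (-1/2)`. -/
noncomputable def alpha (m : ℕ) : ℝ :=
  Real.sqrt (beta m) + (Real.sqrt (beta m))⁻¹

/-- `λ* = √(2+√5)`. -/
noncomputable def lambdaStar : ℝ := Real.sqrt (2 + Real.sqrt 5)

/-- A spherical `L`-code in `ℝ^n`: a finite set of unit vectors whose pairwise
inner products lie in `L`. -/
def SphericalCode (n : ℕ) (L : Set ℝ) (C : Finset (EuclideanSpace ℝ (Fin n))) : Prop :=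
  (∀ v ∈ C, ‖v‖ = 1) ∧
  ∀ v ∈ C, ∀ w ∈ C, v ≠ w → (inner ℝ v w : ℝ) ∈ L

/-- `Nmax a n` : the maximum cardinality of a spherical `{-a, a}`-code in `ℝ^n`,
i.e. the maximum number of equiangular lines in `ℝ^n` with angle `arccos a`. -/
noncomputable def Nmax (a : ℝ) (n : ℕ) : ℕ :=
  sSup {k : ℕ | ∃ C : Finset (EuclideanSpace ℝ (Fin n)),
    SphericalCode n {-a, a} C ∧ C.card = k}

/-- The spectral radius order of `l` : the smallest number of vertices of a finite
simple graph whose spectral radius is `l`; `⊤` if there is no such graph. -/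
noncomputable def specOrder (l : ℝ) : ℕ∞ :=
  sInf ((fun k : ℕ => (k : ℕ∞)) '' {k : ℕ | ∃ G : SimpleGraph (Fin k), specRad G = l})

/-- The set `L(α, t)` from the paper. -/
noncomputable def Lset (a : ℝ) (t : ℕ) : Set ℝ :=
  { -(1 / ((1 - a) / (2 * a))) * (1 - 1 / ((t : ℝ) + a⁻¹)) + 1 / ((t : ℝ) + a⁻¹),
    1 / ((t : ℝ) + a⁻¹) }

/-- The underlying graph of a spherical code: vertices are the code vectors, two
of them adjacent iff their inner product is negative. -/
def codeGraph {n : ℕ} (C : Finset (EuclideanSpace ℝ (Fin n))) :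
    SimpleGraph {v // v ∈ C} :=
  SimpleGraph.fromRel (fun v w =>
    (inner ℝ (v : EuclideanSpace ℝ (Fin n)) (w : EuclideanSpace ℝ (Fin n)) : ℝ) < 0)

/-- `x` is a totally real algebraic integer: it is integral over `ℤ` and every
complex root of its minimal polynomial over `ℚ` is real. -/
def TotallyRealAlgInt (x : ℝ) : Prop :=
  IsIntegral ℤ x ∧ ∀ z : ℂ, Polynomial.aeval z (minpoly ℚ x) = 0 → z.im = 0

/-!
A set of unit vectors with all pairwise products `-a` has at most `1 + 1/a` elements (the norm of
its sum is nonnegative), so by Ramsey a large `{-a, a}`-code contains `t` vectors `Y` with all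
pairwise products `a`. Every other code vector `v` has a sign pattern `⟪v, y⟫ = ±a` against `Y`.
If the pattern is constant, replacing `v` by `±v` makes all its products with `Y` equal to `a`;
projecting these vectors off `∑ Y` and renormalising turns the products `a, -a` into the two
elements of `L(α, t)`. For a fixed mixed pattern, Cauchy–Schwarz against the vector of `span Y`
dual to the pattern shows that, since `t > λ² + 1`, a set of vectors with that pattern and
pairwise products `a` has bounded size; by Ramsey again, only boundedly many code vectors have
a mixed pattern.
-/

open Finset
open scoped RealInnerProductSpace

namespace Finset

variable {V : Type*} {r : V → V → Prop}

theorem exists_insert_pairwise (hr : ∀ ⦃v w⦄, r v w → r w v) {S T : Finset V} {x : V}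
    (hx : x ∈ S) (hTS : T ⊆ S.erase x) (hxT : ∀ v ∈ T, r x v) (hTr : (T : Set V).Pairwise r) :
    ∃ T' ⊆ S, #T' = #T + 1 ∧ (T' : Set V).Pairwise r := by
  refine ⟨insert x T, insert_subset hx (hTS.trans (erase_subset x S)),
    card_insert_of_notMem fun hxT ↦ notMem_erase x S (hTS hxT), ?_⟩
  rw [coe_insert]
  exact hTr.insert fun v hv _ ↦ ⟨hxT v hv, hr (hxT v hv)⟩

theorem exists_pairwise_or_pairwise_not (hr : ∀ ⦃v w⦄, r v w → r w v) (s c : ℕ) (S : Finset V)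
    (hS : (s + c).choose s ≤ #S) :
    (∃ T ⊆ S, #T = s ∧ (T : Set V).Pairwise r) ∨
      ∃ T ⊆ S, #T = c ∧ (T : Set V).Pairwise fun v w ↦ ¬ r v w := by
  induction s generalizing c S with
  | zero => exact .inl ⟨∅, empty_subset S, rfl, by simp⟩
  | succ s ihs =>
    induction c generalizing S with
    | zero => exact .inr ⟨∅, empty_subset S, rfl, by simp⟩
    | succ c ihc =>
      obtain ⟨x, hx⟩ : S.Nonempty := card_pos.1 ((Nat.choose_pos (by omega)).trans_le hS)
      set N₁ := (S.erase x).filter (r x)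
      set N₂ := (S.erase x).filter fun v ↦ ¬ r x v
      have hN : #N₁ + #N₂ + 1 = #S := by
        rw [card_filter_add_card_filter_not, card_erase_add_one hx]
      have hpascal : (s + 1 + (c + 1)).choose (s + 1) =
          (s + (c + 1)).choose s + (s + 1 + c).choose (s + 1) := by
        rw [show s + 1 + (c + 1) = s + c + 1 + 1 by ring, Nat.choose_succ_succ,
          show s + (c + 1) = s + c + 1 by ring, show s + 1 + c = s + c + 1 by ring]
      by_cases h : (s + (c + 1)).choose s ≤ #N₁
      · rcases ihs (c + 1) N₁ h with ⟨T, hTN, hT, hTr⟩ | ⟨T, hTN, hT, hTr⟩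
        · obtain ⟨T', hT'S, hT', hT'r⟩ := exists_insert_pairwise hr hx
            (hTN.trans (filter_subset _ _)) (fun v hv ↦ (mem_filter.1 (hTN hv)).2) hTr
          exact .inl ⟨T', hT'S, by rw [hT', hT], hT'r⟩
        · exact .inr ⟨T, hTN.trans ((filter_subset _ _).trans (erase_subset x S)), hT, hTr⟩
      · rcases ihc N₂ (by omega) with ⟨T, hTN, hT, hTr⟩ | ⟨T, hTN, hT, hTr⟩
        · exact .inl ⟨T, hTN.trans ((filter_subset _ _).trans (erase_subset x S)), hT, hTr⟩
        · obtain ⟨T', hT'S, hT', hT'r⟩ := exists_insert_pairwise (fun v w h h' ↦ h (hr h')) hx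
            (hTN.trans (filter_subset _ _)) (fun v hv ↦ (mem_filter.1 (hTN hv)).2) hTr
          exact .inr ⟨T', hT'S, by rw [hT', hT], hT'r⟩

theorem sum_ite_mem_one_neg_one [DecidableEq V] {Y P : Finset V} (hPY : P ⊆ Y) :
    ∑ y ∈ Y, (if y ∈ P then (1 : ℝ) else -1) = 2 * #P - #Y := by
  have h := card_filter_add_card_filter_not (s := Y) (· ∈ P)
  rw [filter_mem_eq_inter, inter_eq_right.2 hPY] at h
  rw [sum_ite, sum_const, sum_const, filter_mem_eq_inter, inter_eq_right.2 hPY, nsmul_eq_mul,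
    nsmul_eq_mul, ← h]
  push_cast
  ring

end Finset

section

variable {E : Type*} [NormedAddCommGroup E] [InnerProductSpace ℝ E] {T : Finset E} {c : ℝ}

theorem inner_sum_smul_of_pairwise (hT : ∀ v ∈ T, ‖v‖ = 1)
    (hc : (T : Set E).Pairwise fun v w ↦ ⟪v, w⟫ = c) (x : E → ℝ) {v : E} (hv : v ∈ T) :
    ⟪∑ w ∈ T, x w • w, v⟫ = (1 - c) * x v + c * ∑ w ∈ T, x w := by
  have hoff : ∑ w ∈ T.erase v, ⟪x w • w, v⟫ = c * ∑ w ∈ T.erase v, x w := by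
    rw [mul_sum]
    refine sum_congr rfl fun w hw ↦ ?_
    rw [real_inner_smul_left, hc (mem_of_mem_erase hw) hv (ne_of_mem_erase hw), mul_comm]
  rw [sum_inner, ← add_sum_erase T _ hv, ← add_sum_erase T _ hv, hoff, real_inner_smul_left,
    real_inner_self_eq_norm_sq, hT v hv]
  ring

theorem norm_sum_sq_of_pairwise (hT : ∀ v ∈ T, ‖v‖ = 1)
    (hc : (T : Set E).Pairwise fun v w ↦ ⟪v, w⟫ = c) :
    ‖∑ v ∈ T, v‖ ^ 2 = #T * (1 - c) + #T ^ 2 * c := by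
  have hrow : ∀ v ∈ T, ⟪∑ w ∈ T, w, v⟫ = 1 - c + c * #T := fun v hv ↦ by
    simpa using inner_sum_smul_of_pairwise hT hc (fun _ ↦ 1) hv
  rw [← real_inner_self_eq_norm_sq, inner_sum, sum_congr rfl hrow, sum_const, nsmul_eq_mul]
  ring

theorem card_le_of_pairwise_inner_eq_neg {a : ℝ} (ha : 0 < a) (hT : ∀ v ∈ T, ‖v‖ = 1)
    (hneg : (T : Set E).Pairwise fun v w ↦ ⟪v, w⟫ = -a) : (#T : ℝ) ≤ 1 + a⁻¹ := by
  have h := norm_sum_sq_of_pairwise hT hneg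
  have hcard : (#T : ℝ) * a ≤ 1 + a := by
    rcases (Nat.cast_nonneg #T : (0 : ℝ) ≤ #T).eq_or_lt with h0 | h0
    · rw [← h0]; linarith
    · nlinarith [sq_nonneg ‖∑ v ∈ T, v‖]
  refine le_of_mul_le_mul_right (hcard.trans_eq ?_) ha
  field_simp
  ring

theorem exists_pairwise_inner_eq_of_choose_le {a : ℝ} (ha : 0 < a)
    (hT : ∀ v ∈ T, ‖v‖ = 1) (hTa : (T : Set E).Pairwise fun v w ↦ ⟪v, w⟫ ∈ ({-a, a} : Set ℝ))
    {s : ℕ} (hs : (s + (⌊a⁻¹⌋₊ + 2)).choose s ≤ #T) :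
    ∃ S ⊆ T, #S = s ∧ (S : Set E).Pairwise fun v w ↦ ⟪v, w⟫ = a := by
  refine (exists_pairwise_or_pairwise_not (fun v w h ↦ (real_inner_comm v w).trans h) s _ T
    hs).resolve_right ?_
  rintro ⟨S, hST, hS, hSr⟩
  have hneg : (S : Set E).Pairwise fun v w ↦ ⟪v, w⟫ = -a := fun v hv w hw hvw ↦
    (hTa (hST hv) (hST hw) hvw).resolve_right (hSr hv hw hvw)
  have := card_le_of_pairwise_inner_eq_neg ha (fun v hv ↦ hT v (hST hv)) hneg
  rw [hS] at this
  push_cast at this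
  linarith [Nat.lt_floor_add_one a⁻¹]

theorem sq_card_mul_le_of_pairwise (hT : ∀ v ∈ T, ‖v‖ = 1)
    (hc : (T : Set E).Pairwise fun v w ↦ ⟪v, w⟫ = c) {p : E} {β : ℝ}
    (hp : ∀ v ∈ T, ⟪p, v⟫ = β) :
    (#T * β) ^ 2 ≤ ‖p‖ ^ 2 * (#T * (1 - c) + #T ^ 2 * c) := by
  have hpS : ⟪p, ∑ v ∈ T, v⟫ = #T * β := by
    rw [inner_sum, sum_congr rfl hp, sum_const, nsmul_eq_mul]
  calc (#T * β) ^ 2 = ⟪p, ∑ v ∈ T, v⟫ * ⟪p, ∑ v ∈ T, v⟫ := by rw [hpS, sq]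
    _ ≤ ⟪p, p⟫ * ⟪∑ v ∈ T, v, ∑ v ∈ T, v⟫ := real_inner_mul_inner_self_le _ _
    _ = _ := by
      rw [real_inner_self_eq_norm_sq, real_inner_self_eq_norm_sq, norm_sum_sq_of_pairwise hT hc]

theorem inner_sub_smul_sub_smul {v w S : E} {b : ℝ} (hv : ⟪v, S⟫ = b) (hw : ⟪w, S⟫ = b) :
    ⟪v - (b / ‖S‖ ^ 2) • S, w - (b / ‖S‖ ^ 2) • S⟫ = ⟪v, w⟫ - b ^ 2 / ‖S‖ ^ 2 := by
  rw [inner_sub_left, inner_sub_right, inner_sub_right, real_inner_smul_left,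
    real_inner_smul_right, real_inner_smul_right, real_inner_smul_left, real_inner_comm w S, hv, hw,
    real_inner_self_eq_norm_sq]
  rcases eq_or_ne (‖S‖ ^ 2) 0 with h | h
  · simp [h]
  · field_simp
    ring

theorem div_mem_Lset {a : ℝ} (ha : 0 < a) (ha1 : a < 1) (t : ℕ) {β D : ℝ}
    (hβ : β ∈ ({-a, a} : Set ℝ)) (hD : D * (1 - a + t * a) = t * a ^ 2) :
    (β - D) / (1 - D) ∈ Lset a t := by
  have h1a : 1 - a ≠ 0 := by linarith
  have hta : (t : ℝ) * a + 1 ≠ 0 := by positivity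
  have h1D : 1 - D ≠ 0 := fun h ↦ by
    rw [← sub_eq_zero.1 h] at hD
    nlinarith [mul_pos (by linarith : 0 < 1 - a) (by positivity : 0 < (t : ℝ) * a + 1)]
  have hL : 1 / ((t : ℝ) + a⁻¹) = a / (t * a + 1) := by field_simp
  rw [Lset, hL, one_div_div, Set.mem_insert_iff, Set.mem_singleton_iff, div_eq_iff h1D]
  rcases hβ with rfl | rfl
  · left
    field_simp
    linear_combination -(1 + a) * hD
  · right
    field_simp
    linear_combination -hD

/-- Project off `∑ Y` and renormalise: inner products `β` become `(β - D) / (1 - D)` with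
`D = #Y a² / (1 + (#Y - 1) a)`, which sends `a` and `-a` to the two elements of `Lset a #Y`. -/
theorem exists_code_of_forall_inner_eq {a : ℝ} (ha : 0 < a) (ha1 : a < 1) {Y U : Finset E}
    (hY : ∀ v ∈ Y, ‖v‖ = 1) (hYa : (Y : Set E).Pairwise fun v w ↦ ⟪v, w⟫ = a)
    (hU : ∀ v ∈ U, ‖v‖ = 1) (hUa : (U : Set E).Pairwise fun v w ↦ ⟪v, w⟫ ∈ ({-a, a} : Set ℝ))
    (hUY : ∀ u ∈ U, ∀ y ∈ Y, ⟪u, y⟫ = a) :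
    ∃ C : Finset E, (∀ v ∈ C, ‖v‖ = 1) ∧
      (C : Set E).Pairwise (fun v w ↦ ⟪v, w⟫ ∈ Lset a #Y) ∧ #C = #U := by
  set S := ∑ y ∈ Y, y
  set b : ℝ := #Y * a
  set D := b ^ 2 / ‖S‖ ^ 2
  set F : E → E := fun u ↦ (√(1 - D))⁻¹ • (u - (b / ‖S‖ ^ 2) • S)
  have hS : ‖S‖ ^ 2 = #Y * (1 - a) + #Y ^ 2 * a := norm_sum_sq_of_pairwise hY hYa
  have huS : ∀ u ∈ U, ⟪u, S⟫ = b := fun u hu ↦ by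
    rw [inner_sum, sum_congr rfl (hUY u hu), sum_const, nsmul_eq_mul]
  have hD : D * (1 - a + #Y * a) = #Y * a ^ 2 := by
    rcases Nat.eq_zero_or_pos #Y with h0 | h0
    · simp [D, b, h0]
    have : (0 : ℝ) < #Y := by exact_mod_cast h0
    have hr : 0 < 1 - a + #Y * a := by nlinarith
    simp only [D, b, hS]
    field_simp
  have hD1 : D < 1 := by
    have hr : 0 < 1 - a + #Y * a := by nlinarith [(Nat.cast_nonneg #Y : (0 : ℝ) ≤ #Y)]
    have h1D : (1 - D) * (1 - a + #Y * a) = (1 - a) * (1 + #Y * a) := by linear_combination -hD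
    nlinarith [mul_pos (by linarith : 0 < 1 - a) (by positivity : (0 : ℝ) < 1 + #Y * a)]
  have hF : ∀ u ∈ U, ∀ v ∈ U, ⟪F u, F v⟫ = (⟪u, v⟫ - D) / (1 - D) := fun u hu v hv ↦ by
    rw [real_inner_smul_left, real_inner_smul_right, inner_sub_smul_sub_smul (huS u hu) (huS v hv),
      ← mul_assoc, ← mul_inv, Real.mul_self_sqrt (by linarith), inv_mul_eq_div]
  have hFinj : Function.Injective F :=
    (smul_right_injective E (inv_ne_zero (Real.sqrt_pos.2 (by linarith)).ne')).comp
      (sub_left_injective)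
  refine ⟨U.image F, ?_, ?_, card_image_of_injective U hFinj⟩
  · simp only [mem_image, forall_exists_index, and_imp]
    rintro _ u hu rfl
    have := hF u hu u hu
    rw [real_inner_self_eq_norm_sq, real_inner_self_eq_norm_sq, hU u hu, one_pow,
      div_self (by linarith)] at this
    exact (pow_eq_one_iff_of_nonneg (norm_nonneg _) two_ne_zero).1 this
  · simp only [coe_image]
    rintro _ ⟨u, hu, rfl⟩ _ ⟨v, hv, rfl⟩ huv
    rw [hF u hu v hv]
    exact div_mem_Lset ha ha1 _ (hUa hu hv (ne_of_apply_ne F huv)) hD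

theorem image_of_eq_or_eq_neg {a : ℝ} (ha : |a| < 1) {C : Finset E} (hC : ∀ v ∈ C, ‖v‖ = 1)
    (hCa : (C : Set E).Pairwise fun v w ↦ ⟪v, w⟫ ∈ ({-a, a} : Set ℝ)) {f : E → E}
    (hf : ∀ v ∈ C, f v = v ∨ f v = -v) :
    (∀ v ∈ C.image f, ‖v‖ = 1) ∧
      ((C.image f : Set E).Pairwise fun v w ↦ ⟪v, w⟫ ∈ ({-a, a} : Set ℝ)) ∧ #(C.image f) = #C := by
  have hnorm : ∀ v ∈ C, ‖f v‖ = 1 := fun v hv ↦ by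
    rcases hf v hv with h | h <;> rw [h] <;> simp [hC v hv]
  have hpair : ∀ v ∈ C, ∀ w ∈ C, v ≠ w → ⟪f v, f w⟫ ∈ ({-a, a} : Set ℝ) := by
    intro v hv w hw hvw
    have hneg : ∀ x : ℝ, x ∈ ({-a, a} : Set ℝ) → -x ∈ ({-a, a} : Set ℝ) := by
      rintro x (rfl | rfl) <;> simp
    rcases hf v hv with h | h <;> rcases hf w hw with h' | h' <;>
      simp only [h, h', inner_neg_left, inner_neg_right, neg_neg] <;>
      first | exact hCa hv hw hvw | exact hneg _ (hCa hv hw hvw)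
  have hinj : Set.InjOn f C := fun v hv w hw hvw ↦ by
    by_contra hne
    have := hpair v hv w hw hne
    rw [← hvw, real_inner_self_eq_norm_sq, hnorm v hv] at this
    rcases this with h | h <;> rw [abs_lt] at ha <;> norm_num at h <;> linarith
  refine ⟨by simpa using hnorm, ?_, card_image_of_injOn hinj⟩
  rw [coe_image]
  rintro _ ⟨v, hv, rfl⟩ _ ⟨w, hw, rfl⟩ hvw
  exact hpair v hv w hw (ne_of_apply_ne f hvw)

theorem exists_code_of_constant_sign {a : ℝ} (ha : 0 < a) (ha1 : a < 1) {Y G : Finset E}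
    (hY : ∀ v ∈ Y, ‖v‖ = 1) (hYa : (Y : Set E).Pairwise fun v w ↦ ⟪v, w⟫ = a)
    (hG : ∀ v ∈ G, ‖v‖ = 1) (hGa : (G : Set E).Pairwise fun v w ↦ ⟪v, w⟫ ∈ ({-a, a} : Set ℝ))
    (hGY : ∀ v ∈ G, (∀ y ∈ Y, ⟪v, y⟫ = a) ∨ ∀ y ∈ Y, ⟪v, y⟫ = -a) :
    ∃ C : Finset E, (∀ v ∈ C, ‖v‖ = 1) ∧
      (C : Set E).Pairwise (fun v w ↦ ⟪v, w⟫ ∈ Lset a #Y) ∧ #C = #G := by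
  set f : E → E := fun v ↦ if ∀ y ∈ Y, ⟪v, y⟫ = a then v else -v
  obtain ⟨hU, hUa, hUcard⟩ := image_of_eq_or_eq_neg (abs_lt.2 ⟨by linarith, ha1⟩) hG hGa (f := f)
    fun v _ ↦ by simp only [f]; split_ifs <;> simp
  have hUY : ∀ u ∈ G.image f, ∀ y ∈ Y, ⟪u, y⟫ = a := by
    simp only [mem_image, forall_exists_index, and_imp]
    rintro _ v hv rfl y hy
    rcases hGY v hv with h | h
    · simp only [f]
      rw [if_pos h, h y hy]
    · have : ¬ ∀ y ∈ Y, ⟪v, y⟫ = a := fun h' ↦ by linarith [h y hy, h' y hy]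
      simp only [f]
      rw [if_neg this, inner_neg_left, h y hy, neg_neg]
  obtain ⟨C, hC, hCL, hCcard⟩ := exists_code_of_forall_inner_eq ha ha1 hY hYa hU hUa hUY
  exact ⟨C, hC, hCL, hCcard.trans hUcard⟩

theorem inner_sum_smul_eq_of_pairwise (hT : ∀ v ∈ T, ‖v‖ = 1)
    (hc : (T : Set E).Pairwise fun v w ↦ ⟪v, w⟫ = c) (ε : E → ℝ) {v : E} (hv : v ∈ T) :
    ⟪∑ w ∈ T, ((1 + (#T - 1) * c) * ε w - c * ∑ u ∈ T, ε u) • w, v⟫ =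
      (1 - c) * (1 + (#T - 1) * c) * ε v := by
  rw [inner_sum_smul_of_pairwise hT hc _ hv, sum_sub_distrib, ← mul_sum, sum_const, nsmul_eq_mul]
  ring

/-- The Gram matrix of `T` is `(1 - c) I + c J`, and `p = ∑ (q ε v - c ∑ ε) • v` with
`q = 1 + (#T - 1) c` solves `⟪p, v⟫ = (1 - c) q ε v` on `T`. -/
theorem exists_inner_eq_mul_of_pairwise (hT : ∀ v ∈ T, ‖v‖ = 1)
    (hc : (T : Set E).Pairwise fun v w ↦ ⟪v, w⟫ = c) (ε : E → ℝ) (hε : ∀ v ∈ T, ε v ^ 2 = 1) :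
    ∃ p : E, ‖p‖ ^ 2 = (1 - c) * (1 + (#T - 1) * c) *
        ((1 + (#T - 1) * c) * #T - c * (∑ v ∈ T, ε v) ^ 2) ∧
      ∀ w : E, (∀ v ∈ T, ⟪v, w⟫ = c * ε v) →
        ⟪p, w⟫ = c * ((1 + (#T - 1) * c) * #T - c * (∑ v ∈ T, ε v) ^ 2) := by
  set q := 1 + (#T - 1) * c
  set x : E → ℝ := fun v ↦ q * ε v - c * ∑ u ∈ T, ε u
  have hx : ∑ v ∈ T, x v * ε v = q * #T - c * (∑ v ∈ T, ε v) ^ 2 := by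
    simp only [x, sub_mul, mul_assoc, ← sq, sum_sub_distrib, ← mul_sum, sum_congr rfl hε,
      sum_const, nsmul_eq_mul]
    ring
  have hinner : ∀ w : E, ⟪∑ v ∈ T, x v • v, w⟫ = ∑ v ∈ T, x v * ⟪v, w⟫ := fun w ↦ by
    simp only [sum_inner, real_inner_smul_left]
  refine ⟨∑ v ∈ T, x v • v, ?_, fun w hw ↦ ?_⟩
  · rw [← real_inner_self_eq_norm_sq, ← hx, hinner, mul_sum]
    refine sum_congr rfl fun v hv ↦ ?_
    rw [real_inner_comm, inner_sum_smul_eq_of_pairwise hT hc ε hv]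
    ring
  · rw [hinner, ← hx, mul_sum]
    exact sum_congr rfl fun v hv ↦ by rw [hw v hv]; ring

/-- Cauchy–Schwarz between `∑ W` and the vector `p` of `exists_inner_eq_mul_of_pairwise` for the
sign pattern `ε = ±1` of `P`. The factor `4 a² (#Y - 1) - (1 - a)²` comes from the worst mixed
pattern, `|∑ ε| = #Y - 2`. -/
theorem card_mul_le_of_mixed {a : ℝ} (ha : 0 < a) (ha1 : a < 1) {Y W P : Finset E}
    (hY : ∀ v ∈ Y, ‖v‖ = 1) (hYa : (Y : Set E).Pairwise fun v w ↦ ⟪v, w⟫ = a)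
    (hW : ∀ v ∈ W, ‖v‖ = 1) (hWa : (W : Set E).Pairwise fun v w ↦ ⟪v, w⟫ = a)
    (hPY : P ⊂ Y) (hP : P.Nonempty)
    (hYW : ∀ y ∈ Y, ∀ w ∈ W, ⟪y, w⟫ = if y ∈ P then a else -a) :
    #W * a * (4 * a ^ 2 * (#Y - 1) - (1 - a) ^ 2) ≤ (1 - a) ^ 2 * (1 + (#Y - 1) * a) := by
  set t : ℝ := (#Y : ℝ)
  set q : ℝ := 1 + (t - 1) * a
  set ε : E → ℝ := fun y ↦ if y ∈ P then 1 else -1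
  set d : ℝ := ∑ y ∈ Y, ε y
  obtain ⟨p, hpp, hpw⟩ := exists_inner_eq_mul_of_pairwise hY hYa ε fun y _ ↦ by
    by_cases h : y ∈ P <;> simp [ε, h]
  set Q : ℝ := q * t - a * d ^ 2
  have hCS := sq_card_mul_le_of_pairwise hW hWa fun w hw ↦ hpw w fun y hy ↦ by
    by_cases h : y ∈ P <;> simp [ε, h, hYW y hy w hw]
  rw [hpp] at hCS
  have hd : |d| ≤ t - 2 := by
    have h1 : 1 ≤ #P := hP.card_pos
    have h2 : #P + 1 ≤ #Y := card_lt_card hPY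
    rw [show d = 2 * #P - t from sum_ite_mem_one_neg_one hPY.subset, abs_le]
    constructor <;> [skip; skip] <;> (rify at h1 h2; linarith)
  have hd2 : d ^ 2 ≤ (t - 2) ^ 2 :=
    sq_le_sq' (by linarith [neg_abs_le d]) ((le_abs_self d).trans hd)
  have hQ : t * (1 - a) ≤ Q := by nlinarith [abs_nonneg d]
  have hγ : 4 * a ^ 2 * (t - 1) - (1 - a) ^ 2 ≤ a * Q - (1 - a) * q := by nlinarith
  have hq : 0 < q := by nlinarith [abs_nonneg d]
  have key : #W * a * (a * Q - (1 - a) * q) ≤ (1 - a) ^ 2 * q := by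
    rcases (Nat.cast_nonneg #W : (0 : ℝ) ≤ #W).eq_or_lt with h0 | h0
    · rw [← h0, zero_mul, zero_mul]
      positivity
    refine le_of_mul_le_mul_left ?_ (mul_pos h0 (hQ.trans_lt' (by nlinarith [abs_nonneg d])))
    nlinarith
  calc _ ≤ #W * a * (a * Q - (1 - a) * q) := by gcongr
    _ ≤ _ := key

noncomputable def mixedCliqueBound (a : ℝ) (t : ℕ) : ℕ :=
  ⌊(1 - a) ^ 2 * (1 + (t - 1) * a) / (a * (4 * a ^ 2 * (t - 1) - (1 - a) ^ 2))⌋₊ + 1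

theorem lt_mixedCliqueBound {a : ℝ} (ha : 0 < a) {t : ℕ} (ht : ((1 - a) / (2 * a)) ^ 2 + 1 < t) :
    (1 - a) ^ 2 * (1 + (t - 1) * a) <
      mixedCliqueBound a t * a * (4 * a ^ 2 * (t - 1) - (1 - a) ^ 2) := by
  have hγ : 0 < a * (4 * a ^ 2 * (t - 1) - (1 - a) ^ 2) := by
    rw [div_pow, mul_pow] at ht
    have := (div_lt_iff₀ (by positivity)).1 (lt_sub_iff_add_lt.2 ht)
    nlinarith
  rw [mul_assoc, ← div_lt_iff₀ hγ, mixedCliqueBound]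
  push_cast
  exact Nat.lt_floor_add_one _

theorem card_fiber_lt_of_mixed {a : ℝ} (ha : 0 < a) (ha1 : a < 1) {Y B : Finset E}
    (hY : ∀ v ∈ Y, ‖v‖ = 1) (hYa : (Y : Set E).Pairwise fun v w ↦ ⟪v, w⟫ = a)
    (hB : ∀ v ∈ B, ‖v‖ = 1) (hBa : (B : Set E).Pairwise fun v w ↦ ⟪v, w⟫ ∈ ({-a, a} : Set ℝ))
    (hBY : ∀ v ∈ B, ∀ y ∈ Y, ⟪v, y⟫ ∈ ({-a, a} : Set ℝ))
    (hmix : ∀ v ∈ B, ¬ ((∀ y ∈ Y, ⟪v, y⟫ = a) ∨ ∀ y ∈ Y, ⟪v, y⟫ = -a)) {s : ℕ}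
    (hs : (1 - a) ^ 2 * (1 + (#Y - 1) * a) < s * a * (4 * a ^ 2 * (#Y - 1) - (1 - a) ^ 2))
    (P : Finset E) : #{v ∈ B | Y.filter (⟪v, ·⟫ = a) = P} < (s + (⌊a⁻¹⌋₊ + 2)).choose s := by
  by_contra! h
  set F := {v ∈ B | Y.filter (⟪v, ·⟫ = a) = P}
  have hFB : F ⊆ B := filter_subset _ _
  obtain ⟨W, hWF, hW, hWa⟩ := exists_pairwise_inner_eq_of_choose_le ha
    (fun v hv ↦ hB v (hFB hv)) (hBa.mono (coe_subset.2 hFB)) h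
  have hWB : W ⊆ B := hWF.trans hFB
  have hpat : ∀ w ∈ W, Y.filter (⟪w, ·⟫ = a) = P := fun w hw ↦ (mem_filter.1 (hWF hw)).2
  obtain ⟨w₀, hw₀⟩ : W.Nonempty := by
    rw [← card_pos, hW, Nat.pos_iff_ne_zero]
    rintro rfl
    norm_num at hs
    have : 0 < 1 - a + #Y * a := by nlinarith [(Nat.cast_nonneg #Y : (0 : ℝ) ≤ #Y)]
    nlinarith
  have hmix₀ := hmix w₀ (hWB hw₀)
  push Not at hmix₀
  obtain ⟨⟨y₂, hy₂, h₂⟩, ⟨y₁, hy₁, h₁⟩⟩ := hmix₀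
  replace h₁ := (hBY w₀ (hWB hw₀) y₁ hy₁).resolve_left h₁
  have hPY : P ⊂ Y := by
    rw [← hpat w₀ hw₀]
    exact Finset.ssubset_iff_subset_ne.2
      ⟨filter_subset _ _, fun h ↦ h₂ (mem_filter.1 (h.ge hy₂)).2⟩
  have hP : P.Nonempty := ⟨y₁, hpat w₀ hw₀ ▸ mem_filter.2 ⟨hy₁, h₁⟩⟩
  have hYW : ∀ y ∈ Y, ∀ w ∈ W, ⟪y, w⟫ = if y ∈ P then a else -a := by
    intro y hy w hw
    rw [real_inner_comm]
    split_ifs with hyP <;> rw [← hpat w hw, mem_filter] at hyP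
    · exact hyP.2
    · exact (hBY w (hWB hw) y hy).resolve_right fun h ↦ hyP ⟨hy, h⟩
  have := card_mul_le_of_mixed ha ha1 hY hYa (fun v hv ↦ hB v (hWB hv)) hWa hPY hP hYW
  rw [hW] at this
  linarith

theorem card_le_of_mixed {a : ℝ} (ha : 0 < a) (ha1 : a < 1) {Y B : Finset E}
    (hY : ∀ v ∈ Y, ‖v‖ = 1) (hYa : (Y : Set E).Pairwise fun v w ↦ ⟪v, w⟫ = a)
    (hB : ∀ v ∈ B, ‖v‖ = 1) (hBa : (B : Set E).Pairwise fun v w ↦ ⟪v, w⟫ ∈ ({-a, a} : Set ℝ))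
    (hBY : ∀ v ∈ B, ∀ y ∈ Y, ⟪v, y⟫ ∈ ({-a, a} : Set ℝ))
    (hmix : ∀ v ∈ B, ¬ ((∀ y ∈ Y, ⟪v, y⟫ = a) ∨ ∀ y ∈ Y, ⟪v, y⟫ = -a)) {s : ℕ}
    (hs : (1 - a) ^ 2 * (1 + (#Y - 1) * a) < s * a * (4 * a ^ 2 * (#Y - 1) - (1 - a) ^ 2)) :
    #B ≤ 2 ^ #Y * (s + (⌊a⁻¹⌋₊ + 2)).choose s :=
  calc #B ≤ (s + (⌊a⁻¹⌋₊ + 2)).choose s * #Y.powerset :=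
        card_le_mul_card_image_of_maps_to (fun v _ ↦ mem_powerset.2 (filter_subset _ _)) _
          fun P _ ↦ (card_fiber_lt_of_mixed ha ha1 hY hYa hB hBa hBY hmix hs P).le
    _ = 2 ^ #Y * (s + (⌊a⁻¹⌋₊ + 2)).choose s := by rw [card_powerset, mul_comm]

end

/-- The Ramsey threshold for finding `t` vectors with pairwise products `a`, those `t` vectors,
and the bound of `card_le_of_mixed` on the vectors with a mixed sign pattern against them. -/
noncomputable def codeDefect (a : ℝ) (t : ℕ) : ℕ :=
  (t + (⌊a⁻¹⌋₊ + 2)).choose t + t +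
    2 ^ t * (mixedCliqueBound a t + (⌊a⁻¹⌋₊ + 2)).choose (mixedCliqueBound a t)

theorem exists_code_card_le_add {E : Type*} [NormedAddCommGroup E] [InnerProductSpace ℝ E]
    {a : ℝ} (ha : 0 < a) (ha1 : a < 1) {t : ℕ} (ht : ((1 - a) / (2 * a)) ^ 2 + 1 < t)
    {Ca : Finset E} (hCa : ∀ v ∈ Ca, ‖v‖ = 1)
    (hCaa : (Ca : Set E).Pairwise fun v w ↦ ⟪v, w⟫ ∈ ({-a, a} : Set ℝ)) :
    ∃ C : Finset E, (∀ v ∈ C, ‖v‖ = 1) ∧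
      (C : Set E).Pairwise (fun v w ↦ ⟪v, w⟫ ∈ Lset a t) ∧ #Ca ≤ #C + codeDefect a t := by
  by_cases hsmall : #Ca < (t + (⌊a⁻¹⌋₊ + 2)).choose t
  · exact ⟨∅, by simp, by simp, by unfold codeDefect; omega⟩
  obtain ⟨Y, hYCa, rfl, hYa⟩ := exists_pairwise_inner_eq_of_choose_le ha hCa hCaa (not_lt.1 hsmall)
  have hRY : ∀ v ∈ Ca \ Y, ∀ y ∈ Y, ⟪v, y⟫ ∈ ({-a, a} : Set ℝ) := fun v hv y hy ↦
    hCaa (mem_sdiff.1 hv).1 (hYCa hy) fun h ↦ (mem_sdiff.1 hv).2 (h ▸ hy)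
  set G := (Ca \ Y).filter fun v ↦ (∀ y ∈ Y, ⟪v, y⟫ = a) ∨ ∀ y ∈ Y, ⟪v, y⟫ = -a
  set B := (Ca \ Y).filter fun v ↦ ¬ ((∀ y ∈ Y, ⟪v, y⟫ = a) ∨ ∀ y ∈ Y, ⟪v, y⟫ = -a)
  have hsub : ∀ T ⊆ Ca \ Y, (∀ v ∈ T, ‖v‖ = 1) ∧
      (T : Set E).Pairwise fun v w ↦ ⟪v, w⟫ ∈ ({-a, a} : Set ℝ) := fun T hT ↦
    ⟨fun v hv ↦ hCa v (sdiff_subset (hT hv)), hCaa.mono (coe_subset.2 (hT.trans sdiff_subset))⟩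
  have hY : ∀ v ∈ Y, ‖v‖ = 1 := fun v hv ↦ hCa v (hYCa hv)
  obtain ⟨C, hC, hCL, hCcard⟩ := exists_code_of_constant_sign ha ha1 hY hYa
    (hsub G (filter_subset _ _)).1 (hsub G (filter_subset _ _)).2 fun v hv ↦ (mem_filter.1 hv).2
  have hB := card_le_of_mixed ha ha1 hY hYa (hsub B (filter_subset _ _)).1
    (hsub B (filter_subset _ _)).2 (fun v hv ↦ hRY v (filter_subset _ _ hv))
    (fun v hv ↦ (mem_filter.1 hv).2) (lt_mixedCliqueBound ha ht)
  have h1 := card_sdiff_add_card_eq_card hYCa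
  have h2 : #G + #B = #(Ca \ Y) := card_filter_add_card_filter_not _
  exact ⟨C, hC, hCL, by unfold codeDefect; omega⟩

theorem stmt4 (a : ℝ) (ha : a ∈ Set.Ioo (0 : ℝ) 1) (t : ℕ)
    (ht : ((1 - a) / (2 * a)) ^ 2 + 1 < (t : ℝ)) :
    ∃ K : ℕ, ∀ n : ℕ, ∀ Ca : Finset (EuclideanSpace ℝ (Fin n)),
      SphericalCode n {-a, a} Ca →
      ∃ C : Finset (EuclideanSpace ℝ (Fin n)),
        SphericalCode n (Lset a t) C ∧ Ca.card ≤ C.card + K :=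
  ⟨codeDefect a t, fun _ _ hCa ↦
    let ⟨C, hC, hCL, hcard⟩ := exists_code_card_le_add ha.1 ha.2 ht hCa.1 hCa.2
    ⟨C, ⟨hC, hCL⟩, hcard⟩⟩
end

section
/- Let α ∈ (0,1), λ := (1−α)/(2α), and let 𝒢 be a finite family of finite simple graphs, each with spectral radius strictly greater than λ. Then there exists t ∈ ℕ such that for every n ∈ ℕ, the underlying graph of any spherical L(α,t)-code in ℝ^n does not contain any member of 𝒢 as a subgraph. -/
/-!
Let `q = 1 / (t + α⁻¹)`, so that `L(α, t) = {q - (1 - q) / λ, q}`. If a graph `G` sits inside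
the underlying graph of such a code, its edges carry inner product `q - (1 - q) / λ` (the only
negative value) and its other pairs at most `q`, so the Gram matrix of the embedded vectors is
dominated entrywise by `(1 - q) I + q J - ((1 - q) / λ) A(G)`. Testing against a nonnegative
vector `x` with `xᵀ A(G) x > λ ‖x‖²`, which exists because `λ₁(G) > λ`, gives
`(1 - q) (xᵀ A x - λ ‖x‖²) ≤ q λ (∑ x)²`, impossible once `q` is small, i.e. `t` is large.
Finitely many graphs need only finitely many thresholds.
-/

open scoped Classical

open Matrix Filter Topology

lemma adjMat_nonneg {V : Type*} [Fintype V] (G : SimpleGraph V) (i j : V) :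
    0 ≤ adjMat G i j := by
  unfold adjMat; split_ifs <;> norm_num

lemma adjMat_self {V : Type*} [Fintype V] (G : SimpleGraph V) (i : V) :
    adjMat G i i = 0 := by
  simp [adjMat]

lemma abs_dotProduct_abs {V : Type*} [Fintype V] (v : V → ℝ) : |v| ⬝ᵥ |v| = v ⬝ᵥ v := by
  simp only [dotProduct, Pi.abs_apply, abs_mul_abs_self]

lemma mul_dotProduct_abs_le_of_mulVec_eq {V : Type*} [Fintype V] {A : Matrix V V ℝ}
    (hA : ∀ i j, 0 ≤ A i j) {μ : ℝ} {v : V → ℝ} (hv : A *ᵥ v = μ • v) :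
    μ * (|v| ⬝ᵥ |v|) ≤ |v| ⬝ᵥ (A *ᵥ |v|) :=
  calc μ * (|v| ⬝ᵥ |v|) = v ⬝ᵥ (A *ᵥ v) := by
        rw [hv, dotProduct_smul, smul_eq_mul, abs_dotProduct_abs]
    _ ≤ |v ⬝ᵥ (A *ᵥ v)| := le_abs_self _
    _ ≤ |v| ⬝ᵥ (A *ᵥ |v|) := by
        simp only [dotProduct, mulVec, Pi.abs_apply]
        refine (Finset.abs_sum_le_sum_abs _ _).trans (Finset.sum_le_sum fun i _ => ?_)
        rw [abs_mul]
        refine mul_le_mul_of_nonneg_left ((Finset.abs_sum_le_sum_abs _ _).trans ?_) (abs_nonneg _)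
        exact Finset.sum_le_sum fun j _ => by rw [abs_mul, abs_of_nonneg (hA i j)]

lemma exists_nonneg_mul_dotProduct_lt_adjMat {V : Type*} [Fintype V] (G : SimpleGraph V)
    {l : ℝ} (hl : 0 ≤ l) (hlG : l < specRad G) :
    ∃ x : V → ℝ, 0 ≤ x ∧ l * (x ⬝ᵥ x) < x ⬝ᵥ (adjMat G *ᵥ x) := by
  obtain ⟨μ, ⟨v, hv0, hv⟩, hlμ⟩ :
      ∃ μ ∈ {μ : ℝ | ∃ v : V → ℝ, v ≠ 0 ∧ adjMat G *ᵥ v = μ • v}, l < μ := by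
    by_contra! h
    exact hlG.not_ge (Real.sSup_le h hl)
  have hpos : 0 < |v| ⬝ᵥ |v| :=
    (dotProduct_nonneg_of_nonneg (abs_nonneg v) (abs_nonneg v)).lt_of_ne'
      (by rwa [abs_dotProduct_abs, Ne, dotProduct_self_eq_zero])
  refine ⟨|v|, abs_nonneg v, ?_⟩
  calc l * (|v| ⬝ᵥ |v|) < μ * (|v| ⬝ᵥ |v|) := mul_lt_mul_of_pos_right hlμ hpos
    _ ≤ |v| ⬝ᵥ (adjMat G *ᵥ |v|) := mul_dotProduct_abs_le_of_mulVec_eq (adjMat_nonneg G) hv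

lemma dotProduct_mulVec_le_of_le {V : Type*} [Fintype V] {M B : Matrix V V ℝ}
    (hMB : ∀ i j, M i j ≤ B i j) {x : V → ℝ} (hx : 0 ≤ x) :
    x ⬝ᵥ (M *ᵥ x) ≤ x ⬝ᵥ (B *ᵥ x) :=
  dotProduct_le_dotProduct_of_nonneg_left
    (fun i => dotProduct_le_dotProduct_of_nonneg_right (fun j => hMB i j) hx) hx

lemma dotProduct_gram_mulVec_nonneg {ι F : Type*} [Fintype ι] [NormedAddCommGroup F]
    [InnerProductSpace ℝ F] (u : ι → F) (x : ι → ℝ) : 0 ≤ x ⬝ᵥ (gram ℝ u *ᵥ x) := by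
  have h := star_dotProduct_gram_mulVec (𝕜 := ℝ) u x x
  rw [star_trivial] at h
  exact h ▸ real_inner_self_nonneg

lemma inner_neg_of_codeGraph_adj {n : ℕ} {C : Finset (EuclideanSpace ℝ (Fin n))}
    {v w : {v // v ∈ C}} (h : (codeGraph C).Adj v w) :
    inner ℝ (v : EuclideanSpace ℝ (Fin n)) w < 0 := by
  rcases (SimpleGraph.fromRel_adj _ _ _).1 h with ⟨-, h | h⟩
  · exact h
  · rwa [real_inner_comm]

section CodeBound

variable {V : Type*} [Fintype V] [DecidableEq V]

/-- The matrix `(1 - q) I + q J - c A(G)`, which dominates entrywise the Gram matrix of any copy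
of `G` in the underlying graph of a spherical `{q - c, q}`-code. -/
noncomputable def codeBound (G : SimpleGraph V) (q c : ℝ) : Matrix V V ℝ :=
  (1 - q) • 1 + of (fun _ _ => q) - c • adjMat G

lemma dotProduct_codeBound_mulVec (G : SimpleGraph V) (q c : ℝ) (x : V → ℝ) :
    x ⬝ᵥ (codeBound G q c *ᵥ x) =
      (1 - q) * (x ⬝ᵥ x) + q * (∑ i, x i) ^ 2 - c * (x ⬝ᵥ (adjMat G *ᵥ x)) := by
  simp only [codeBound, sub_mulVec, add_mulVec, smul_mulVec, one_mulVec, dotProduct_sub,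
    dotProduct_add, dotProduct_smul, smul_eq_mul]
  congr 2
  simp only [dotProduct, mulVec, of_apply, ← Finset.mul_sum, ← Finset.sum_mul]
  ring

lemma codeBound_apply (G : SimpleGraph V) (q c : ℝ) (i j : V) :
    codeBound G q c i j = (if i = j then 1 else q) - c * adjMat G i j := by
  simp only [codeBound, Matrix.sub_apply, Matrix.add_apply, Matrix.smul_apply, of_apply,
    one_apply, smul_eq_mul]
  split_ifs <;> ring

lemma gram_le_codeBound {n : ℕ} {C : Finset (EuclideanSpace ℝ (Fin n))} {q c : ℝ}
    (hq : 0 < q) (hc : 0 ≤ c) (hC : SphericalCode n {q - c, q} C) {G : SimpleGraph V}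
    {f : V → {v // v ∈ C}} (hf : Function.Injective f)
    (hfG : ∀ ⦃a b⦄, G.Adj a b → (codeGraph C).Adj (f a) (f b)) (i j : V) :
    gram ℝ (fun i => (f i : EuclideanSpace ℝ (Fin n))) i j ≤ codeBound G q c i j := by
  rw [gram_apply, codeBound_apply]
  by_cases hij : i = j
  · subst hij
    rw [real_inner_self_eq_norm_sq, hC.1 _ (f i).2, adjMat_self]
    simp
  have hmem := hC.2 _ (f i).2 _ (f j).2 fun h => hij (hf (Subtype.ext h))
  simp only [Set.mem_insert_iff, Set.mem_singleton_iff] at hmem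
  by_cases hadj : G.Adj i j
  · have hneg := inner_neg_of_codeGraph_adj (hfG hadj)
    rw [if_neg hij, show adjMat G i j = 1 from if_pos hadj, mul_one]
    rcases hmem with h | h
    · exact h.le
    · linarith
  · rw [if_neg hij, show adjMat G i j = 0 from if_neg hadj, mul_zero, sub_zero]
    rcases hmem with h | h
    · linarith
    · exact h.le

lemma mul_dotProduct_adjMat_le_of_contains {n : ℕ} {C : Finset (EuclideanSpace ℝ (Fin n))}
    {q c : ℝ} (hq : 0 < q) (hc : 0 ≤ c) (hC : SphericalCode n {q - c, q} C)
    {G : SimpleGraph V} (hGC : Contains G (codeGraph C)) {x : V → ℝ} (hx : 0 ≤ x) :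
    c * (x ⬝ᵥ (adjMat G *ᵥ x)) ≤ (1 - q) * (x ⬝ᵥ x) + q * (∑ i, x i) ^ 2 := by
  obtain ⟨f, hf, hfG⟩ := hGC
  have h := (dotProduct_gram_mulVec_nonneg _ x).trans
    (dotProduct_mulVec_le_of_le (gram_le_codeBound hq hc hC hf hfG) hx)
  rw [dotProduct_codeBound_mulVec] at h
  linarith

end CodeBound

lemma Lset_eq (a : ℝ) (t : ℕ) :
    Lset a t = {1 / ((t : ℝ) + a⁻¹) - (1 - 1 / ((t : ℝ) + a⁻¹)) / ((1 - a) / (2 * a)),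
      1 / ((t : ℝ) + a⁻¹)} := by
  rw [Lset]
  congr 1
  ring

lemma tendsto_one_div_natCast_add_atTop (b : ℝ) :
    Tendsto (fun t : ℕ => 1 / ((t : ℝ) + b)) atTop (𝓝 0) :=
  tendsto_const_nhds.div_atTop (tendsto_natCast_atTop_atTop.atTop_add tendsto_const_nhds)

theorem eventually_not_contains_codeGraph {V : Type*} [Fintype V] (G : SimpleGraph V)
    {a : ℝ} (ha : a ∈ Set.Ioo 0 1) (hG : (1 - a) / (2 * a) < specRad G) :
    ∀ᶠ t : ℕ in atTop, ∀ (n : ℕ) (C : Finset (EuclideanSpace ℝ (Fin n))),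
      SphericalCode n (Lset a t) C → ¬ Contains G (codeGraph C) := by
  obtain ⟨ha0, ha1⟩ := ha
  set l := (1 - a) / (2 * a)
  have hl : 0 < l := div_pos (by linarith) (by linarith)
  obtain ⟨x, hx, hxl⟩ := exists_nonneg_mul_dotProduct_lt_adjMat G hl.le hG
  set P := x ⬝ᵥ (adjMat G *ᵥ x) - l * (x ⬝ᵥ x)
  have hP : 0 < P := sub_pos.2 hxl
  have hT : 0 ≤ l * (∑ i, x i) ^ 2 := by positivity
  have hsmall : ∀ᶠ t : ℕ in atTop, 1 / ((t : ℝ) + a⁻¹) * (l * (∑ i, x i) ^ 2 + P) < P := by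
    refine Tendsto.eventually_lt_const hP ?_
    simpa using (tendsto_one_div_natCast_add_atTop a⁻¹).mul_const
      (l * (∑ i, x i) ^ 2 + P)
  -- The Gram bound forces `(1 - q) P ≤ q l (∑ x)²`, which fails once `q` is small.
  filter_upwards [hsmall] with t ht n C hC hGC
  set q := 1 / ((t : ℝ) + a⁻¹)
  have hq0 : 0 < q := by positivity
  have hq1 : q < 1 := by nlinarith
  rw [Lset_eq] at hC
  have h := mul_dotProduct_adjMat_le_of_contains hq0 (div_nonneg (by linarith) hl.le) hC hGC hx
  rw [div_mul_eq_mul_div, div_le_iff₀ hl] at h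
  nlinarith

theorem stmt5 (a : ℝ) (ha : a ∈ Set.Ioo (0 : ℝ) 1) (N : ℕ) (k : Fin N → ℕ)
    (Gs : ∀ i : Fin N, SimpleGraph (Fin (k i)))
    (hG : ∀ i : Fin N, (1 - a) / (2 * a) < specRad (Gs i)) :
    ∃ t : ℕ, ∀ (n : ℕ) (C : Finset (EuclideanSpace ℝ (Fin n))),
      SphericalCode n (Lset a t) C → ∀ i : Fin N, ¬ Contains (Gs i) (codeGraph C) := by
  obtain ⟨t, ht⟩ := (eventually_all.2 fun i =>
    eventually_not_contains_codeGraph (Gs i) ha (hG i)).exists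
  exact ⟨t, fun n C hC i => ht i n C hC⟩
end

section
/- Let λ > 0 and let G be a connected finite simple graph with spectral radius λ₁(G) ≤ λ, with adjacency matrix A and number of vertices v(G). If the spectral radius order k(λ) is finite, then v(G) ≤ (k(λ)/(k(λ)−1)) · rank(I − A/λ). If k(λ) = ∞, then v(G) ≤ rank(I − A/λ). -/
open scoped Classical

/-! Write `N = I - A/λ`. Since `λ₁(G) ≤ λ`, `N` is positive semidefinite, and its off-diagonal
entries are `≤ 0`. For such a matrix, `Nv = 0` forces `N|v| = 0`, because passing to `|v|` can
only lower the quadratic form; connectivity then makes `|v|` positive everywhere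
(Perron–Frobenius). So no nonzero kernel vector vanishes at a fixed vertex, and the nullity of `N`
is at most one. If it is zero, `rank N = v(G)`. If it is one, `λ` is an eigenvalue of `A`, so
`λ₁(G) = λ`, hence `k(λ) ≤ v(G)`, and `rank N = v(G) - 1 ≥ (1 - 1/k(λ)) v(G)`. -/

namespace Matrix

variable {n : Type*} [Fintype n]

/-- `specRad G` is, unfolded, `sSup (adjMat G).eigenvalueSet`. -/
def eigenvalueSet (M : Matrix n n ℝ) : Set ℝ :=
  {μ : ℝ | ∃ v : n → ℝ, v ≠ 0 ∧ M *ᵥ v = μ • v}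

theorem finite_eigenvalueSet [DecidableEq n] (M : Matrix n n ℝ) : M.eigenvalueSet.Finite :=
  (Module.End.finite_hasEigenvalue (toLin' M)).subset fun _ ⟨v, hv0, hv⟩ =>
    Module.End.hasEigenvalue_of_hasEigenvector
      ⟨Module.End.mem_eigenspace_iff.mpr (by simpa using hv), hv0⟩

theorem eigenvalueSet_submatrix_equiv {m : Type*} [Fintype m] (M : Matrix n n ℝ) (e : m ≃ n) :
    (M.submatrix e e).eigenvalueSet = M.eigenvalueSet := by
  ext μ
  constructor
  · rintro ⟨v, hv0, hv⟩
    refine ⟨v ∘ e.symm, fun h => hv0 (funext fun i => ?_), funext fun i => ?_⟩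
    · simpa using congrFun h (e i)
    · simpa [submatrix_mulVec_equiv] using congrFun hv (e.symm i)
  · rintro ⟨w, hw0, hw⟩
    refine ⟨w ∘ e, fun h => hw0 (funext fun i => ?_), ?_⟩
    · simpa using congrFun h (e.symm i)
    · rw [submatrix_mulVec_equiv, Function.comp_assoc, e.self_comp_symm, Function.comp_id, hw]
      rfl

theorem IsHermitian.posSemidef_of_eigenvalueSet_nonneg [DecidableEq n] {M : Matrix n n ℝ}
    (hM : M.IsHermitian) (h : ∀ t ∈ M.eigenvalueSet, 0 ≤ t) : M.PosSemidef :=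
  hM.posSemidef_iff_eigenvalues_nonneg.mpr fun i =>
    h _ ⟨_, fun h0 => hM.eigenvectorBasis.orthonormal.ne_zero i (by simpa using h0),
      hM.mulVec_eigenvectorBasis i⟩

theorem PosSemidef.mulVec_abs_eq_zero {N : Matrix n n ℝ} (hN : N.PosSemidef)
    (hoff : ∀ i j, i ≠ j → N i j ≤ 0) {v : n → ℝ} (hv : N *ᵥ v = 0) : N *ᵥ |v| = 0 := by
  refine (hN.dotProduct_mulVec_zero_iff _).mp (le_antisymm ?_ (hN.dotProduct_mulVec_nonneg _))
  calc star |v| ⬝ᵥ N *ᵥ |v| = ∑ i, ∑ j, N i j * (|v i| * |v j|) := by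
        simp only [star_trivial, dotProduct, mulVec, Pi.abs_apply, Finset.mul_sum]
        exact Finset.sum_congr rfl fun _ _ => Finset.sum_congr rfl fun _ _ => by ring
    _ ≤ ∑ i, ∑ j, N i j * (v i * v j) := by
        refine Finset.sum_le_sum fun i _ => Finset.sum_le_sum fun j _ => ?_
        rcases eq_or_ne i j with rfl | hij
        · rw [abs_mul_abs_self]
        · exact mul_le_mul_of_nonpos_left (by rw [← abs_mul]; exact le_abs_self _) (hoff i j hij)
    _ = star v ⬝ᵥ N *ᵥ v := by
        simp only [star_trivial, dotProduct, mulVec, Finset.mul_sum]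
        exact Finset.sum_congr rfl fun _ _ => Finset.sum_congr rfl fun _ _ => by ring
    _ = 0 := by rw [hv, dotProduct_zero]

theorem pos_of_mulVec_eq_zero {N : Matrix n n ℝ} (hoff : ∀ i j, i ≠ j → N i j ≤ 0) {w : n → ℝ}
    (hw : 0 ≤ w) (hNw : N *ᵥ w = 0) {i j : n} (hN : N j i < 0) (hi : 0 < w i) : 0 < w j := by
  by_contra! hj
  have hterm : ∀ k ∈ Finset.univ, N j k * w k ≤ 0 := fun k _ => by
    rcases eq_or_ne j k with rfl | hjk
    · rw [le_antisymm hj (hw j), mul_zero]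
    · exact mul_nonpos_of_nonpos_of_nonneg (hoff j k hjk) (hw k)
  have hlt : ∑ k, N j k * w k < ∑ _k : n, 0 :=
    Finset.sum_lt_sum hterm ⟨i, Finset.mem_univ _, mul_neg_of_neg_of_pos hN hi⟩
  have hsum : ∑ k, N j k * w k = 0 := congrFun hNw j
  rw [hsum, Finset.sum_const_zero] at hlt
  exact hlt.false

end Matrix

theorem SimpleGraph.Reachable.imp_of_adj {V : Type*} {G : SimpleGraph V} {p : V → Prop}
    (hp : ∀ ⦃u v⦄, G.Adj u v → p u → p v) {u v : V} (huv : G.Reachable u v) : p u → p v := by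
  rw [SimpleGraph.reachable_iff_reflTransGen] at huv
  induction huv with
  | refl => exact id
  | tail _ hadj ih => exact hp hadj ∘ ih

open Matrix

section SpectralRadius

variable {V : Type*} [Fintype V]

theorem le_specRad [DecidableEq V] {G : SimpleGraph V} {μ : ℝ}
    (hμ : μ ∈ (adjMat G).eigenvalueSet) : μ ≤ specRad G :=
  le_csSup (finite_eigenvalueSet _).bddAbove hμ

theorem specRad_comap_equiv {W : Type*} [Fintype W] (G : SimpleGraph V) (e : W ≃ V) :
    specRad (G.comap e) = specRad G :=
  congrArg sSup (eigenvalueSet_submatrix_equiv (adjMat G) e)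

theorem specRad_nonpos_of_subsingleton [Subsingleton V] (G : SimpleGraph V) : specRad G ≤ 0 := by
  refine Real.sSup_nonpos fun μ ⟨v, hv0, hv⟩ => ?_
  have hA : adjMat G = 0 := by
    ext i j
    exact if_neg fun h => h.ne (Subsingleton.elim i j)
  rw [hA, zero_mulVec] at hv
  exact ((smul_eq_zero.mp hv.symm).resolve_right hv0).le

theorem adjMat_isHermitian (G : SimpleGraph V) : (adjMat G).IsHermitian := by
  ext i j
  simp only [conjTranspose_apply, adjMat, star_trivial, G.adj_comm]

theorem specOrder_le_card {G : SimpleGraph V} {l : ℝ} (h : specRad G = l) :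
    specOrder l ≤ Fintype.card V :=
  sInf_le ⟨_, ⟨G.comap (Fintype.equivFin V).symm, (specRad_comap_equiv G _).trans h⟩, rfl⟩

theorem exists_specRad_eq_of_specOrder_eq {l : ℝ} {k : ℕ} (h : specOrder l = k) :
    ∃ G : SimpleGraph (Fin k), specRad G = l := by
  have hne : ((fun k : ℕ => (k : ℕ∞)) ''
      {k : ℕ | ∃ G : SimpleGraph (Fin k), specRad G = l}).Nonempty := by
    by_contra! hempty
    rw [specOrder, hempty, sInf_empty] at h
    exact ENat.top_ne_natCast k h
  obtain ⟨m, hm, hmk⟩ := csInf_mem hne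
  rwa [← Nat.cast_injective (hmk.trans h)]

theorem two_le_of_specOrder_eq {l : ℝ} (hl : 0 < l) {k : ℕ} (h : specOrder l = k) : 2 ≤ k := by
  obtain ⟨G, hG⟩ := exists_specRad_eq_of_specOrder_eq h
  by_contra! hk
  have : Subsingleton (Fin k) := Fin.subsingleton_iff_le_one.mpr (by omega)
  linarith [specRad_nonpos_of_subsingleton G]

end SpectralRadius

section Kernel

variable {V : Type*} [Fintype V] [DecidableEq V] {G : SimpleGraph V} {lam : ℝ}

theorem one_sub_smul_adjMat_apply_nonpos (hlam : 0 ≤ lam) {i j : V} (hij : i ≠ j) :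
    (1 - lam⁻¹ • adjMat G) i j ≤ 0 := by
  simp only [Matrix.sub_apply, one_apply_ne hij, Matrix.smul_apply, smul_eq_mul, adjMat]
  split_ifs <;> simp [hlam]

theorem one_sub_smul_adjMat_apply_neg (hlam : 0 < lam) {i j : V} (hij : G.Adj i j) :
    (1 - lam⁻¹ • adjMat G) i j < 0 := by
  simp [one_apply_ne hij.ne, adjMat, hij, hlam]

theorem one_sub_smul_adjMat_mulVec_eq_zero_iff (hlam : lam ≠ 0) {v : V → ℝ} :
    (1 - lam⁻¹ • adjMat G) *ᵥ v = 0 ↔ adjMat G *ᵥ v = lam • v := by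
  rw [sub_mulVec, one_mulVec, smul_mulVec, sub_eq_zero, eq_comm, inv_smul_eq_iff₀ hlam]

theorem posSemidef_one_sub_smul_adjMat (hlam : 0 < lam) (hle : specRad G ≤ lam) :
    (1 - lam⁻¹ • adjMat G).PosSemidef := by
  refine (isHermitian_one.sub ((adjMat_isHermitian G).smul (IsSelfAdjoint.all _)))
    |>.posSemidef_of_eigenvalueSet_nonneg fun t ⟨v, hv0, hv⟩ => ?_
  rw [sub_mulVec, one_mulVec, smul_mulVec] at hv
  have hscaled : lam⁻¹ • (adjMat G *ᵥ v) = (1 - t) • v := by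
    rw [sub_smul, one_smul, ← hv]; abel
  have hAv : adjMat G *ᵥ v = (lam * (1 - t)) • v := by
    rw [mul_smul, ← hscaled, smul_inv_smul₀ hlam.ne']
  nlinarith [le_specRad ⟨v, hv0, hAv⟩]

theorem apply_ne_zero_of_one_sub_smul_adjMat_mulVec_eq_zero (hlam : 0 < lam) (hc : G.Connected)
    (hle : specRad G ≤ lam) {v : V → ℝ} (hv : (1 - lam⁻¹ • adjMat G) *ᵥ v = 0) (hv0 : v ≠ 0)
    (i : V) : v i ≠ 0 := by
  obtain ⟨j, hj⟩ := Function.ne_iff.mp hv0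
  have hoff : ∀ a b : V, a ≠ b → (1 - lam⁻¹ • adjMat G) a b ≤ 0 :=
    fun _ _ => one_sub_smul_adjMat_apply_nonpos hlam.le
  have habs := (posSemidef_one_sub_smul_adjMat hlam hle).mulVec_abs_eq_zero hoff hv
  have hpos : 0 < |v| i := (hc.preconnected j i).imp_of_adj
    (fun _ _ hab => pos_of_mulVec_eq_zero hoff (abs_nonneg v) habs
      (one_sub_smul_adjMat_apply_neg hlam hab.symm))
    (abs_pos.mpr hj)
  exact abs_pos.mp hpos

theorem finrank_ker_one_sub_smul_adjMat_le_one (hlam : 0 < lam) (hc : G.Connected)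
    (hle : specRad G ≤ lam) :
    Module.finrank ℝ (LinearMap.ker (1 - lam⁻¹ • adjMat G).mulVecLin) ≤ 1 := by
  obtain ⟨b⟩ := hc.nonempty
  have hinj : Function.Injective
      (LinearMap.proj (R := ℝ) (φ := fun _ : V => ℝ) b ∘ₗ
        (LinearMap.ker (1 - lam⁻¹ • adjMat G).mulVecLin).subtype) := by
    refine (injective_iff_map_eq_zero _).mpr fun x hx => ?_
    by_contra hx0
    exact apply_ne_zero_of_one_sub_smul_adjMat_mulVec_eq_zero hlam hc hle x.2
      (by simpa using hx0) b hx
  simpa using LinearMap.finrank_le_finrank_of_injective hinj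

theorem rank_one_sub_smul_adjMat (hlam : 0 < lam) (hc : G.Connected) (hle : specRad G ≤ lam) :
    (1 - lam⁻¹ • adjMat G).rank = Fintype.card V ∨
      ((1 - lam⁻¹ • adjMat G).rank + 1 = Fintype.card V ∧ specRad G = lam) := by
  have hnullity := (1 - lam⁻¹ • adjMat G).mulVecLin.finrank_range_add_finrank_ker
  rw [Module.finrank_fintype_fun_eq_card, ← Matrix.rank] at hnullity
  rcases (finrank_ker_one_sub_smul_adjMat_le_one hlam hc hle).lt_or_eq with h0 | h1
  · left; omega
  · refine .inr ⟨by omega, le_antisymm hle (le_specRad ?_)⟩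
    obtain ⟨v, hv, hv0⟩ := Submodule.exists_mem_ne_zero_of_ne_bot
      (Submodule.one_le_finrank_iff.mp h1.ge)
    exact ⟨v, hv0, (one_sub_smul_adjMat_mulVec_eq_zero_iff hlam.ne').mp hv⟩

end Kernel

theorem stmt6 (lam : ℝ) (hlam : 0 < lam) (V : Type) [Fintype V] [DecidableEq V]
    (G : SimpleGraph V) (hc : G.Connected) (hle : specRad G ≤ lam) :
    (∀ k : ℕ, specOrder lam = (k : ℕ∞) →
      (Fintype.card V : ℝ) ≤ ((k : ℝ) / ((k : ℝ) - 1)) *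
        ((1 : Matrix V V ℝ) - lam⁻¹ • adjMat G).rank) ∧
    (specOrder lam = ⊤ →
      Fintype.card V ≤ ((1 : Matrix V V ℝ) - lam⁻¹ • adjMat G).rank) := by
  have hrank := rank_one_sub_smul_adjMat hlam hc hle
  refine ⟨fun k hk => ?_, fun htop => ?_⟩
  · have hk2 : (2 : ℝ) ≤ k := by exact_mod_cast two_le_of_specOrder_eq hlam hk
    rcases hrank with hfull | ⟨hdrop, hG⟩
    · rw [hfull]
      exact le_mul_of_one_le_left (Nat.cast_nonneg _) ((one_le_div (by linarith)).mpr (by linarith))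
    · have hkV : (k : ℝ) ≤ Fintype.card V := by exact_mod_cast hk ▸ specOrder_le_card hG
      have hdrop' : (((1 : Matrix V V ℝ) - lam⁻¹ • adjMat G).rank : ℝ) = Fintype.card V - 1 := by
        rw [← hdrop]; push_cast; ring
      rw [hdrop', div_mul_eq_mul_div, le_div_iff₀ (by linarith)]
      nlinarith
  · rcases hrank with hfull | ⟨-, hG⟩
    · exact hfull.ge
    · exact absurd (htop ▸ specOrder_le_card hG) (by simp)
end

section
/- Let α ∈ (0,1), t ∈ ℕ, and λ := (1−α)/(2α). For any spherical L(α,t)-code C in ℝ^n, if A is the adjacency matrix of the underlying graph of C, then rank(I − A/λ) ≤ n + 1. -/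
open scoped Classical

/-!
Let `q = 1/(t + α⁻¹)` and `p = q - (1 - q)/λ` be the two inner products allowed in
`L(α, t)`. For `α ∈ (0, 1)` one has `p < 0 < q < 1`, so two distinct code vectors are adjacent
exactly when their inner product is `p`. Hence the Gram matrix of the code is
`(1 - q)(I - A/λ) + qJ`, and `I - A/λ` is, up to the nonzero factor `1 - q`, the difference of
a Gram matrix of vectors in `ℝⁿ` (rank at most `n`) and a multiple of the all-ones matrix
(rank at most `1`).
-/

open Matrix Module

theorem Matrix.rank_add_le {K m n : Type*} [Field K] [Fintype n] (A B : Matrix m n K) :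
    (A + B).rank ≤ A.rank + B.rank := by
  rw [Matrix.rank, Matrix.rank, Matrix.rank, mulVecLin_add]
  exact (Submodule.finrank_mono (LinearMap.range_add_le _ _)).trans
    (Submodule.finrank_add_le_finrank_add_finrank _ _)

theorem Matrix.rank_gram_le {𝕜 E ι : Type*} [RCLike 𝕜] [NormedAddCommGroup E]
    [InnerProductSpace 𝕜 E] [FiniteDimensional 𝕜 E] [Fintype ι] (v : ι → E) :
    (gram 𝕜 v).rank ≤ finrank 𝕜 E := by
  rw [gram_eq_conjTranspose_mul (stdOrthonormalBasis 𝕜 E)]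
  exact (rank_mul_le_right _ _).trans ((rank_le_card_height _).trans_eq (Fintype.card_fin _))

theorem codeGraph_adj_iff {n : ℕ} {C : Finset (EuclideanSpace ℝ (Fin n))} {v w : C} :
    (codeGraph C).Adj v w ↔ v ≠ w ∧ inner ℝ (v : EuclideanSpace ℝ (Fin n)) w < 0 := by
  rw [codeGraph, SimpleGraph.fromRel_adj, real_inner_comm (w : EuclideanSpace ℝ (Fin n)), or_self]

theorem smul_one_sub_smul_adjMat_codeGraph {n : ℕ} {C : Finset (EuclideanSpace ℝ (Fin n))}
    {μ q : ℝ} (hC : SphericalCode n {-μ * (1 - q) + q, q} C) (hp : -μ * (1 - q) + q < 0)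
    (hq : 0 ≤ q) :
    (1 - q) • (1 - μ • adjMat (codeGraph C)) =
      gram ℝ ((↑) : C → EuclideanSpace ℝ (Fin n)) + vecMulVec (fun _ ↦ -q) (fun _ ↦ 1) := by
  ext v w
  simp only [Matrix.smul_apply, Matrix.sub_apply, Matrix.add_apply, gram_apply, vecMulVec_apply,
    adjMat, smul_eq_mul]
  by_cases hvw : v = w
  · subst hvw
    rw [one_apply_eq, if_neg (SimpleGraph.irrefl _), real_inner_self_eq_norm_sq, hC.1 v v.2]
    ring
  · have hne : (v : EuclideanSpace ℝ (Fin n)) ≠ w := Subtype.coe_injective.ne hvw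
    rw [one_apply_ne hvw]
    rcases hC.2 v v.2 w w.2 hne with hinner | hinner
    · rw [if_pos (codeGraph_adj_iff.2 ⟨hvw, hinner ▸ hp⟩), hinner]
      ring
    · rw [if_neg fun hadj ↦ (codeGraph_adj_iff.1 hadj).2.not_ge (hinner ▸ hq), hinner]
      ring

theorem rank_one_sub_smul_adjMat_codeGraph_le {n : ℕ} {C : Finset (EuclideanSpace ℝ (Fin n))}
    {μ q : ℝ} (hC : SphericalCode n {-μ * (1 - q) + q, q} C) (hp : -μ * (1 - q) + q < 0)
    (hq₀ : 0 ≤ q) (hq₁ : q ≠ 1) :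
    (1 - μ • adjMat (codeGraph C)).rank ≤ n + 1 := by
  have hq : 1 - q ∈ nonZeroDivisors ℝ := mem_nonZeroDivisors_of_ne_zero (sub_ne_zero.2 hq₁.symm)
  rw [← rank_smul_of_mem_nonZeroDivisors _ hq, smul_one_sub_smul_adjMat_codeGraph hC hp hq₀]
  calc _ ≤ _ := rank_add_le _ _
    _ ≤ n + 1 := by
      gcongr
      · exact (rank_gram_le _).trans_eq finrank_euclideanSpace_fin
      · exact rank_vecMulVec_le _ _

theorem Lset_bounds {a : ℝ} (ha : a ∈ Set.Ioo (0 : ℝ) 1) (t : ℕ) :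
    0 < 1 / ((t : ℝ) + a⁻¹) ∧ 1 / ((t : ℝ) + a⁻¹) < 1 ∧
      -(1 / ((1 - a) / (2 * a))) * (1 - 1 / ((t : ℝ) + a⁻¹)) + 1 / ((t : ℝ) + a⁻¹) < 0 := by
  obtain ⟨ha₀, ha₁⟩ := ha
  set s : ℝ := t + a⁻¹
  set l : ℝ := (1 - a) / (2 * a)
  have hinv : 1 < a⁻¹ := (one_lt_inv₀ ha₀).2 ha₁
  have hs : 1 < s := lt_add_of_nonneg_of_lt t.cast_nonneg hinv
  have hl : 0 < l := div_pos (sub_pos.2 ha₁) (by positivity)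
  have hls : l < s - 1 := calc
    l < (1 - a) / a := div_lt_div_of_pos_left (sub_pos.2 ha₁) ha₀ (by linarith)
    _ = a⁻¹ - 1 := by field_simp
    _ ≤ s - 1 := by linarith [(t.cast_nonneg : (0 : ℝ) ≤ t)]
  have hform : -(1 / l) * (1 - 1 / s) + 1 / s = (l - (s - 1)) / (l * s) := by
    field_simp
    ring
  refine ⟨by positivity, (div_lt_one (by positivity)).2 hs, ?_⟩
  rw [hform]
  exact div_neg_of_neg_of_pos (by linarith) (by positivity)

theorem stmt7 (a : ℝ) (ha : a ∈ Set.Ioo (0 : ℝ) 1) (t : ℕ) (n : ℕ)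
    (C : Finset (EuclideanSpace ℝ (Fin n))) (hC : SphericalCode n (Lset a t) C) :
    ((1 : Matrix {v // v ∈ C} {v // v ∈ C} ℝ) -
      ((1 - a) / (2 * a))⁻¹ • adjMat (codeGraph C)).rank ≤ n + 1 := by
  obtain ⟨hq₀, hq₁, hp⟩ := Lset_bounds ha t
  rw [← one_div]
  exact rank_one_sub_smul_adjMat_codeGraph_le hC hp hq₀.le hq₁.ne
end

section
/- Let α ∈ (0,1) and λ := (1−α)/(2α). If λ is not a totally real algebraic integer, then n ≤ N_α(n) ≤ n + 1 for all n ≥ 1. -/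
open scoped Classical

/-! If a `{-α, α}`-code `C` in `ℝⁿ` had more than `n + 1` vectors, there would be a nonzero
`x : C → ℝ` with `∑ x v • v = 0` and `∑ x v = 0`. The Gram matrix of `C` is
`(1 - α) I + α J - 2α A`, where `A` is the adjacency matrix of the graph of obtuse pairs, so
`A x = λ x`. But an eigenvalue of a symmetric integer matrix is a totally real algebraic integer.
The lower bound comes from the `n` vectors `√(1 - α) eᵢ + c 𝟙`, for a suitable constant `c`. -/

open Matrix Polynomial
open scoped InnerProductSpace

namespace Matrix

variable {N : Type*} [Fintype N] [DecidableEq N]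

theorem isRoot_charpoly_of_mulVec_eq_smul {K : Type*} [Field K] {M : Matrix N N K}
    {x : N → K} {μ : K} (hx : x ≠ 0) (hMx : M *ᵥ x = μ • x) : M.charpoly.IsRoot μ := by
  rw [← mem_spectrum_iff_isRoot_charpoly, ← spectrum_toLin']
  exact (Module.End.hasEigenvalue_of_hasEigenvector
    ⟨Module.End.mem_eigenspace_iff.mpr (by simpa using hMx), hx⟩).mem_spectrum

theorem IsSymm.im_eq_zero_of_isRoot_charpoly {A : Matrix N N ℤ} (hA : A.IsSymm) {z : ℂ}
    (hz : (A.map ((↑) : ℤ → ℂ)).charpoly.IsRoot z) : z.im = 0 := by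
  have hH : (A.map ((↑) : ℤ → ℂ)).IsHermitian := by
    ext i j
    simp [← hA.apply i j]
  rw [← mem_roots (charpoly_monic _).ne_zero, hH.roots_charpoly_eq_eigenvalues] at hz
  obtain ⟨i, -, rfl⟩ := Multiset.mem_map.mp hz
  simp

theorem IsSymm.totallyRealAlgInt_of_mulVec_eq_smul {A : Matrix N N ℤ} (hA : A.IsSymm)
    {x : N → ℝ} {l : ℝ} (hx : x ≠ 0) (hAx : A.map ((↑) : ℤ → ℝ) *ᵥ x = l • x) :
    TotallyRealAlgInt l := by
  have hl : aeval l A.charpoly = 0 := by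
    rw [← eval_map_algebraMap, algebraMap_int_eq, ← charpoly_map]
    exact isRoot_charpoly_of_mulVec_eq_smul hx hAx
  refine ⟨⟨A.charpoly, A.charpoly_monic, hl⟩, fun z hz => hA.im_eq_zero_of_isRoot_charpoly ?_⟩
  obtain ⟨q, hq⟩ := minpoly.dvd ℚ l (p := A.charpoly.map (algebraMap ℤ ℚ))
    (by rwa [aeval_map_algebraMap])
  have hzA : aeval z (A.charpoly.map (algebraMap ℤ ℚ)) = 0 := by
    rw [hq, map_mul, hz, zero_mul]
  rwa [aeval_map_algebraMap, ← eval_map_algebraMap, algebraMap_int_eq, ← charpoly_map] at hzA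

end Matrix

theorem SimpleGraph.totallyRealAlgInt_of_adjMatrix_mulVec_eq_smul {V : Type*} [Fintype V]
    [DecidableEq V] (G : SimpleGraph V) [DecidableRel G.Adj] {x : V → ℝ} {l : ℝ} (hx : x ≠ 0)
    (hGx : G.adjMatrix ℝ *ᵥ x = l • x) : TotallyRealAlgInt l := by
  refine G.isSymm_adjMatrix.totallyRealAlgInt_of_mulVec_eq_smul hx ?_
  convert hGx using 2
  ext i j
  simp [SimpleGraph.adjMatrix_apply, apply_ite]

theorem codeGraph_adj {n : ℕ} {C : Finset (EuclideanSpace ℝ (Fin n))} {v w : C} :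
    (codeGraph C).Adj v w ↔ v ≠ w ∧ ⟪(v : EuclideanSpace ℝ (Fin n)), w⟫_ℝ < 0 := by
  simp [codeGraph, real_inner_comm]

namespace SphericalCode

variable {n : ℕ} {a : ℝ} {C : Finset (EuclideanSpace ℝ (Fin n))}

theorem gram_eq (hC : SphericalCode n {-a, a} C) (ha : 0 < a) :
    gram ℝ ((↑) : C → EuclideanSpace ℝ (Fin n)) =
      (1 - a) • 1 + a • of (fun _ _ => 1) - (2 * a) • (codeGraph C).adjMatrix ℝ := by
  ext v w
  by_cases hvw : v = w
  · subst hvw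
    simp [hC.1 v v.2]
  · have hne : (v : EuclideanSpace ℝ (Fin n)) ≠ w := fun h => hvw (Subtype.ext h)
    rcases hC.2 v v.2 w w.2 hne with h | h
    · simp [hvw, SimpleGraph.adjMatrix_apply, codeGraph_adj, h, ha]
      ring
    · rw [Set.mem_singleton_iff] at h
      simp [hvw, SimpleGraph.adjMatrix_apply, codeGraph_adj, h, ha.not_gt]

theorem adjMatrix_mulVec_eq_smul (hC : SphericalCode n {-a, a} C) (ha : 0 < a) {x : C → ℝ}
    (hsum : ∑ v, x v = 0) (hrel : ∑ v, x v • (v : EuclideanSpace ℝ (Fin n)) = 0) :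
    (codeGraph C).adjMatrix ℝ *ᵥ x = ((1 - a) / (2 * a)) • x := by
  have hgram : gram ℝ ((↑) : C → EuclideanSpace ℝ (Fin n)) *ᵥ x = 0 := by
    ext v
    calc (gram ℝ ((↑) : C → EuclideanSpace ℝ (Fin n)) *ᵥ x) v
        = ⟪(v : EuclideanSpace ℝ (Fin n)), ∑ w, x w • (w : EuclideanSpace ℝ (Fin n))⟫_ℝ := by
          simp only [mulVec, dotProduct, gram_apply, inner_sum, inner_smul_right, mul_comm]
      _ = 0 := by rw [hrel, inner_zero_right]
  have hJ : of (fun (_ _ : C) => (1 : ℝ)) *ᵥ x = 0 := by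
    ext v
    simp only [mulVec, dotProduct, of_apply, one_mul, hsum, Pi.zero_apply]
  rw [hC.gram_eq ha] at hgram
  simp only [sub_mulVec, add_mulVec, smul_mulVec, one_mulVec, hJ, smul_zero, add_zero] at hgram
  ext v
  have hv := congrFun hgram v
  simp only [Pi.sub_apply, Pi.smul_apply, smul_eq_mul, Pi.zero_apply] at hv ⊢
  field_simp
  linarith

theorem card_le_succ (hC : SphericalCode n {-a, a} C) (ha : 0 < a)
    (h : ¬ TotallyRealAlgInt ((1 - a) / (2 * a))) : C.card ≤ n + 1 := by
  by_contra! hcard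
  obtain ⟨f, hrel, hsum, v, hv, hfv⟩ :=
    Module.exists_nontrivial_relation_sum_zero_of_finrank_succ_lt_card (R := ℝ)
      (by rwa [finrank_euclideanSpace_fin])
  refine h ((codeGraph C).totallyRealAlgInt_of_adjMatrix_mulVec_eq_smul (x := fun w => f w)
    (fun h0 => hfv (congrFun h0 ⟨v, hv⟩)) (hC.adjMatrix_mulVec_eq_smul ha ?_ ?_))
  · rwa [Finset.sum_coe_sort C f]
  · rwa [Finset.sum_coe_sort C fun w => f w • w]

end SphericalCode

theorem exists_equiangular_family {a : ℝ} (ha0 : 0 ≤ a) (ha1 : a < 1) (n : ℕ) :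
    ∃ v : Fin n → EuclideanSpace ℝ (Fin n),
      ∀ i j, ⟪v i, v j⟫_ℝ = if i = j then 1 else a := by
  set b := √(1 - a)
  set s := √(1 - a + n * a)
  -- `c` is a root of `n c² + 2 b c = a`, which makes `⟪b eᵢ + c 𝟙, b eⱼ + c 𝟙⟫ = b² δᵢⱼ + a`.
  set c := (s - b) / n
  have hb : b ^ 2 = 1 - a := Real.sq_sqrt (by linarith)
  have hs : s ^ 2 = 1 - a + n * a := Real.sq_sqrt (by positivity)
  have hc (hn : (n : ℝ) ≠ 0) : 2 * b * c + n * c ^ 2 = a := by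
    simp only [c]
    field_simp
    linear_combination hs - hb
  let u : EuclideanSpace ℝ (Fin n) := WithLp.toLp 2 fun _ => 1
  have huu : ⟪u, u⟫_ℝ = n := by
    rw [PiLp.inner_apply]
    simp [u]
  refine ⟨fun i => b • EuclideanSpace.single i 1 + c • u, fun i j => ?_⟩
  have hn : (n : ℝ) ≠ 0 := by exact_mod_cast i.pos.ne'
  simp only [inner_add_left, inner_add_right, real_inner_smul_left, real_inner_smul_right,
    EuclideanSpace.inner_single_left, EuclideanSpace.inner_single_right, huu]
  split_ifs with hij
  · subst hij
    simp only [PiLp.smul_apply, PiLp.single_eq_same, smul_eq_mul, mul_one, Real.ringHom_apply,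
      one_mul, u]
    linear_combination hc hn + hb
  · simp only [PiLp.smul_apply, ne_eq, hij, not_false_eq_true, PiLp.single_eq_of_ne',
      smul_eq_mul, mul_zero, Real.ringHom_apply, mul_one, one_mul, zero_add, u]
    linear_combination hc hn

theorem exists_sphericalCode_card_eq {a : ℝ} (ha0 : 0 ≤ a) (ha1 : a < 1) (n : ℕ) :
    ∃ C, SphericalCode n {-a, a} C ∧ C.card = n := by
  obtain ⟨v, hv⟩ := exists_equiangular_family ha0 ha1 n
  have hinj : Function.Injective v := by
    intro i j hij
    by_contra hne
    have h := hv i j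
    rw [hij, hv j j, if_pos rfl, if_neg hne] at h
    exact ha1.ne' h
  refine ⟨Finset.univ.image v, ⟨?_, ?_⟩, by simp [Finset.card_image_of_injective _ hinj]⟩
  · simp only [Finset.mem_image, Finset.mem_univ, true_and, forall_exists_index,
      forall_apply_eq_imp_iff]
    intro i
    have h := hv i i
    rw [if_pos rfl, real_inner_self_eq_norm_sq] at h
    exact (pow_eq_one_iff_of_nonneg (norm_nonneg _) two_ne_zero).mp h
  · simp only [Finset.mem_image, Finset.mem_univ, true_and, forall_exists_index,
      forall_apply_eq_imp_iff]
    intro i j hij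
    rw [hv, if_neg (fun h => hij (congrArg v h))]
    exact Set.mem_insert_of_mem _ rfl

theorem Nmax_le {a : ℝ} {n m : ℕ} (h : ∀ C, SphericalCode n {-a, a} C → C.card ≤ m) :
    Nmax a n ≤ m :=
  csSup_le ⟨0, ∅, ⟨by simp, by simp⟩, rfl⟩ (by rintro k ⟨C, hC, rfl⟩; exact h C hC)

theorem card_le_Nmax {a : ℝ} {n m : ℕ} {C : Finset (EuclideanSpace ℝ (Fin n))}
    (hC : SphericalCode n {-a, a} C) (h : ∀ C, SphericalCode n {-a, a} C → C.card ≤ m) :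
    C.card ≤ Nmax a n :=
  le_csSup ⟨m, by rintro k ⟨C, hC, rfl⟩; exact h C hC⟩ ⟨C, hC, rfl⟩

theorem stmt10 (a : ℝ) (ha : a ∈ Set.Ioo (0 : ℝ) 1)
    (h : ¬ TotallyRealAlgInt ((1 - a) / (2 * a))) :
    ∀ n : ℕ, 1 ≤ n → n ≤ Nmax a n ∧ Nmax a n ≤ n + 1 := by
  intro n _
  have hbound (C) (hC : SphericalCode n {-a, a} C) : C.card ≤ n + 1 :=
    hC.card_le_succ ha.1 h
  obtain ⟨C, hC, hcard⟩ := exists_sphericalCode_card_eq ha.1.le ha.2 n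
  exact ⟨hcard.ge.trans (card_le_Nmax hC hbound), Nmax_le hbound⟩
end

section
/- For every m ≥ 2, the real number α_m is an algebraic integer but is not totally real: α_m is a root of a monic polynomial with integer coefficients, and the minimal polynomial of α_m over ℚ has at least one non-real complex root. -/
open scoped Classical

/-!
`√β_m` is a root of `X^(2m+2) - ∑_{i<m} X^(2i)`, a monic integer polynomial with constant
term `-1`, so `√β_m` and its inverse are algebraic integers, and hence so is `α_m`. The minimal
polynomial of `√β_m` over `ℤ` divides it, so it has constant term `±1` and the absolute values
of the conjugates of `√β_m` multiply to `1`; as `√β_m > 1`, some conjugate `u` has `|u| < 1`.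
This `u` is not real: `u²` would be a root of `X^(m+1) - ∑_{i<m} X^i` in `[0, 1)`, where
`X^(m+1) < 1 ≤ ∑_{i<m} X^i`. Sending `√β_m ↦ u` maps `α_m` to its conjugate `u + u⁻¹`, whose
imaginary part `Im u · (1 - |u|⁻²)` is nonzero.
-/

open Polynomial

theorem IsIntegral.inv_of_aeval_eq_zero {R K : Type*} [CommRing R] [Field K] [Algebra R K]
    {x : K} {p : R[X]} (hp : p.Monic) (hx : aeval x p = 0) (h0 : IsUnit (p.coeff 0)) :
    IsIntegral R x⁻¹ := by
  obtain ⟨c, hc⟩ := h0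
  -- `p = X * divX p + C (p.coeff 0)` evaluated at `x` writes `x⁻¹` as a polynomial in `x`.
  have hsplit := congrArg (aeval x) (X_mul_divX_add p)
  rw [hx, map_add, map_mul, aeval_X, aeval_C, ← hc] at hsplit
  have hc_inv : algebraMap R K ↑c⁻¹ * algebraMap R K ↑c = 1 := by
    rw [← map_mul, Units.inv_mul, map_one]
  have hinv : x⁻¹ = -algebraMap R K ↑c⁻¹ * aeval x p.divX :=
    inv_eq_of_mul_eq_one_right (by linear_combination (-algebraMap R K ↑c⁻¹) * hsplit + hc_inv)
  rw [hinv]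
  exact isIntegral_algebraMap.neg.mul <|
    .of_mem_of_fg _ (IsIntegral.fg_adjoin_singleton ⟨p, hp, hx⟩) _ (aeval_mem_adjoin_singleton R x)

theorem Complex.im_add_inv_ne_zero {u : ℂ} (hu : u.im ≠ 0) (h : ‖u‖ ≠ 1) :
    (u + u⁻¹).im ≠ 0 := by
  have hn1 : Complex.normSq u ≠ 1 := by
    rwa [← Complex.sq_norm, Ne, pow_eq_one_iff_of_nonneg (norm_nonneg u) two_ne_zero]
  have him : (u + u⁻¹).im = u.im * (1 - (Complex.normSq u)⁻¹) := by
    rw [Complex.add_im, Complex.inv_im]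
    ring
  rw [him]
  exact mul_ne_zero hu (sub_ne_zero.mpr (Ne.symm (inv_eq_one.not.mpr hn1)))

theorem exists_aeval_eq_zero_norm_lt_one {p : ℤ[X]} (hp : p.Monic) (h0 : IsUnit (p.coeff 0))
    {z : ℂ} (hz : aeval z p = 0) (hz1 : 1 < ‖z‖) : ∃ u : ℂ, aeval u p = 0 ∧ ‖u‖ < 1 := by
  set q : ℂ[X] := p.map (algebraMap ℤ ℂ)
  have hq : q.Monic := hp.map _
  have hroots : ∀ u, u ∈ q.roots ↔ aeval u p = 0 := fun u => by
    rw [mem_roots hq.ne_zero, IsRoot.def, eval_map_algebraMap]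
  have hprod : (q.roots.map (‖·‖)).prod = 1 := by
    have hcoeff : ‖q.coeff 0‖ = 1 := by
      rcases Int.isUnit_iff.mp h0 with h | h <;> simp [q, coeff_map, h]
    rw [(IsAlgClosed.splits q).coeff_zero_eq_prod_roots_of_monic hq, norm_mul, norm_pow,
      norm_neg, norm_one, one_pow, one_mul] at hcoeff
    rw [← hcoeff]
    exact (map_multiset_prod (normHom : ℂ →*₀ ℝ) q.roots).symm
  by_contra! hge
  obtain ⟨t, ht⟩ := Multiset.exists_cons_of_mem ((hroots z).mpr hz)
  rw [ht, Multiset.map_cons, Multiset.prod_cons] at hprod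
  have hrest : 1 ≤ (t.map (‖·‖)).prod := Multiset.one_le_prod_map fun u hu =>
    hge u ((hroots u).mp (ht ▸ Multiset.mem_cons_of_mem hu))
  nlinarith

theorem minpoly.aeval_add_inv_eq_zero {K L M : Type*} [Field K] [Field L] [Field M]
    [Algebra K L] [Algebra K M] {s : L} (hs : IsIntegral K s) {u : M}
    (hu : Polynomial.aeval u (minpoly K s) = 0) :
    Polynomial.aeval (u + u⁻¹) (minpoly K (s + s⁻¹)) = 0 := by
  have : Fact (Irreducible (minpoly K s)) := ⟨minpoly.irreducible hs⟩
  let φ := AdjoinRoot.liftAlgHom (minpoly K s) (Algebra.ofId K L) s (minpoly.aeval K s)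
  let ψ := AdjoinRoot.liftAlgHom (minpoly K s) (Algebra.ofId K M) u hu
  let r := AdjoinRoot.root (minpoly K s)
  have hφ : φ (r + r⁻¹) = s + s⁻¹ := by
    rw [map_add, map_inv₀, show φ r = s from AdjoinRoot.liftAlgHom_root ..]
  have hψ : ψ (r + r⁻¹) = u + u⁻¹ := by
    rw [map_add, map_inv₀, show ψ r = u from AdjoinRoot.liftAlgHom_root ..]
  rw [← hφ, minpoly.algHom_eq φ φ.injective, ← hψ, aeval_algHom_apply, minpoly.aeval, map_zero]

noncomputable def betaPoly (m : ℕ) : ℤ[X] := X ^ (m + 1) - ∑ i ∈ Finset.range m, X ^ i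

@[simp]
theorem aeval_betaPoly {A : Type*} [CommRing A] (m : ℕ) (x : A) :
    aeval x (betaPoly m) = x ^ (m + 1) - ∑ i ∈ Finset.range m, x ^ i := by
  simp [betaPoly]

theorem monic_betaPoly (m : ℕ) : (betaPoly m).Monic := by
  unfold betaPoly
  monicity!
  exact natDegree_sum_le_of_forall_le _ _ fun i hi =>
    (natDegree_X_pow_le i).trans (by simp only [Finset.mem_range] at hi; omega)

theorem coeff_zero_betaPoly {m : ℕ} (hm : 1 ≤ m) : (betaPoly m).coeff 0 = -1 := by
  simp [betaPoly, finsetSum_coeff, coeff_X_pow]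
  omega

theorem aeval_betaPoly_ne_zero {m : ℕ} (hm : 1 ≤ m) {x : ℝ} (hx0 : 0 ≤ x) (hx1 : x < 1) :
    aeval x (betaPoly m) ≠ 0 := by
  have hlt : x ^ (m + 1) < 1 := pow_lt_one₀ hx0 hx1 (Nat.succ_ne_zero m)
  have hle : 1 ≤ ∑ i ∈ Finset.range m, x ^ i := by
    simpa using Finset.single_le_sum (fun i _ => pow_nonneg hx0 i)
      (Finset.mem_range.mpr (by omega : 0 < m))
  rw [aeval_betaPoly]
  linarith

theorem one_lt_of_aeval_betaPoly_eq_zero {m : ℕ} (hm : 2 ≤ m) {x : ℝ} (hx0 : 0 ≤ x)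
    (hx : aeval x (betaPoly m) = 0) : 1 < x := by
  rcases lt_trichotomy x 1 with hlt | rfl | hgt
  · exact absurd hx (aeval_betaPoly_ne_zero (by omega) hx0 hlt)
  · have hm' : (2 : ℝ) ≤ m := by exact_mod_cast hm
    simp only [aeval_betaPoly, one_pow, Finset.sum_const, Finset.card_range, nsmul_eq_mul,
      mul_one] at hx
    linarith
  · exact hgt

theorem exists_pos_aeval_betaPoly_eq_zero {m : ℕ} (hm : 1 ≤ m) :
    ∃ x : ℝ, 0 < x ∧ aeval x (betaPoly m) = 0 := by
  have h1 : aeval (1 : ℝ) (betaPoly m) ≤ 0 := by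
    have hm' : (1 : ℝ) ≤ m := by exact_mod_cast hm
    simp only [aeval_betaPoly, one_pow, Finset.sum_const, Finset.card_range, nsmul_eq_mul,
      mul_one]
    linarith
  have h2 : 0 ≤ aeval (2 : ℝ) (betaPoly m) := by
    have hgeom : ∑ i ∈ Finset.range m, (2 : ℝ) ^ i = 2 ^ m - 1 := by
      rw [geom_sum_eq (by norm_num) m]
      norm_num
    rw [aeval_betaPoly, hgeom, pow_succ]
    linarith [pow_pos (two_pos (α := ℝ)) m]
  obtain ⟨x, hx, hx0⟩ :=
    intermediate_value_Icc one_le_two (betaPoly m).continuous_aeval.continuousOn ⟨h1, h2⟩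
  exact ⟨x, one_pos.trans_le hx.1, hx0⟩

theorem beta_pos_and_aeval_eq_zero {m : ℕ} (hm : 1 ≤ m) :
    0 < beta m ∧ aeval (beta m) (betaPoly m) = 0 := by
  have hset : {x : ℝ | 0 < x ∧ x ^ (m + 1) = ∑ i ∈ Finset.range m, x ^ i}
      = {x | 0 < x ∧ aeval x (betaPoly m) = 0} := by
    simp only [aeval_betaPoly, sub_eq_zero]
  have hfin : {x : ℝ | 0 < x ∧ aeval x (betaPoly m) = 0}.Finite :=
    ((betaPoly m).rootSet_finite ℝ).subset fun x hx =>
      mem_rootSet.mpr ⟨(monic_betaPoly m).ne_zero, hx.2⟩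
  rw [beta, hset]
  exact Set.Nonempty.csSup_mem (exists_pos_aeval_betaPoly_eq_zero hm) hfin

theorem one_lt_beta {m : ℕ} (hm : 2 ≤ m) : 1 < beta m :=
  have hβ := beta_pos_and_aeval_eq_zero (m := m) (by omega)
  one_lt_of_aeval_betaPoly_eq_zero hm hβ.1.le hβ.2

theorem monic_expand_betaPoly (m : ℕ) : (expand ℤ 2 (betaPoly m)).Monic :=
  (monic_expand_iff two_pos).mpr (monic_betaPoly m)

theorem isUnit_coeff_zero_expand_betaPoly {m : ℕ} (hm : 1 ≤ m) :
    IsUnit ((expand ℤ 2 (betaPoly m)).coeff 0) := by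
  simp [coeff_expand two_pos, coeff_zero_betaPoly hm]

theorem aeval_sqrt_beta_expand_betaPoly {m : ℕ} (hm : 1 ≤ m) :
    aeval √(beta m) (expand ℤ 2 (betaPoly m)) = 0 := by
  obtain ⟨hβ, hroot⟩ := beta_pos_and_aeval_eq_zero hm
  rwa [expand_aeval, Real.sq_sqrt hβ.le]

theorem im_ne_zero_of_aeval_expand_betaPoly_eq_zero {m : ℕ} (hm : 1 ≤ m) {u : ℂ}
    (hu : aeval u (expand ℤ 2 (betaPoly m)) = 0) (hu1 : ‖u‖ < 1) : u.im ≠ 0 := by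
  intro him
  have hre : u = (u.re : ℂ) := Complex.ext rfl (by simp [him])
  have habs : |u.re| < 1 := by rwa [hre, Complex.norm_real, Real.norm_eq_abs] at hu1
  refine aeval_betaPoly_ne_zero hm (sq_nonneg u.re) ((sq_lt_one_iff_abs_lt_one _).mpr habs) ?_
  rw [expand_aeval, hre, aeval_betaPoly] at hu
  rw [aeval_betaPoly]
  exact_mod_cast hu

theorem isIntegral_sqrt_beta {m : ℕ} (hm : 1 ≤ m) : IsIntegral ℤ √(beta m) :=
  ⟨_, monic_expand_betaPoly m, aeval_sqrt_beta_expand_betaPoly hm⟩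

theorem isIntegral_alpha {m : ℕ} (hm : 1 ≤ m) : IsIntegral ℤ (alpha m) :=
  (isIntegral_sqrt_beta hm).add <| .inv_of_aeval_eq_zero (monic_expand_betaPoly m)
    (aeval_sqrt_beta_expand_betaPoly hm) (isUnit_coeff_zero_expand_betaPoly hm)

theorem exists_conj_sqrt_beta_norm_lt_one {m : ℕ} (hm : 2 ≤ m) :
    ∃ u : ℂ, aeval u (minpoly ℚ √(beta m)) = 0 ∧ u.im ≠ 0 ∧ ‖u‖ < 1 := by
  set s := √(beta m)
  have hm1 : 1 ≤ m := by omega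
  have hroot : aeval s (expand ℤ 2 (betaPoly m)) = 0 := aeval_sqrt_beta_expand_betaPoly hm1
  have hs_int : IsIntegral ℤ s := isIntegral_sqrt_beta hm1
  obtain ⟨r, hr⟩ := minpoly.isIntegrallyClosed_dvd hs_int hroot
  have hunit : IsUnit ((minpoly ℤ s).coeff 0) := by
    have h := isUnit_coeff_zero_expand_betaPoly hm1
    rw [hr, mul_coeff_zero] at h
    exact isUnit_of_mul_isUnit_left h
  have hs1 : 1 < ‖(s : ℂ)‖ := by
    rw [Complex.norm_real, Real.norm_eq_abs, abs_of_nonneg (Real.sqrt_nonneg _)]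
    exact Real.lt_sqrt_of_sq_lt (by simpa using one_lt_beta hm)
  obtain ⟨u, hu, hu1⟩ := exists_aeval_eq_zero_norm_lt_one (minpoly.monic hs_int) hunit
    (by rw [← Complex.coe_algebraMap, aeval_algebraMap_apply, minpoly.aeval, map_zero]) hs1
  refine ⟨u, ?_, im_ne_zero_of_aeval_expand_betaPoly_eq_zero hm1 ?_ hu1, hu1⟩
  · rw [minpoly.isIntegrallyClosed_eq_field_fractions' ℚ hs_int, aeval_map_algebraMap, hu]
  · rw [hr, map_mul, hu, zero_mul]

theorem stmt11 (m : ℕ) (hm : 2 ≤ m) :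
    IsIntegral ℤ (alpha m) ∧
    ∃ z : ℂ, Polynomial.aeval z (minpoly ℚ (alpha m)) = 0 ∧ z.im ≠ 0 := by
  obtain ⟨u, hu, him, hu1⟩ := exists_conj_sqrt_beta_norm_lt_one hm
  have hm1 : 1 ≤ m := by omega
  exact ⟨isIntegral_alpha hm1, u + u⁻¹,
    minpoly.aeval_add_inv_eq_zero (isIntegral_sqrt_beta hm1).tower_top hu,
    Complex.im_add_inv_ne_zero him hu1.ne⟩
end

section
/- For integers n ≥ 2, let D_n be the graph consisting of a cycle on n + 1 vertices together with one additional pendant vertex attached by an edge to one vertex of the cycle (so D_n has n + 2 vertices). Then the sequence n ↦ λ₁(D_n) is strictly decreasing and converges to λ* := √(2+√5) as n → ∞. -/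
/-
For `t > 0` put `λ = t + t⁻¹`. On the cycle `0, …, n` of `D_n` the vector
`c_k = t^k + t^(n+1-k)` satisfies `c_(k-1) + c_(k+1) = λ c_k` (indices mod `n + 1`), and with
the value `c_0 / λ` on the pendant vertex the eigenvalue equation at the hub `0` becomes
`t^(n+1) (t⁴ - t² - 1) = t⁴ + t² - 1`. This has a root `t_n > √φ` (`φ` the golden ratio), and a
positive eigenvector of a nonnegative symmetric matrix carries its spectral radius, so
`λ₁(D_n) = t_n + t_n⁻¹`. On `(√φ, ∞)` the power `t^(n+1)` increases in `t` and `n` while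
`(t⁴ + t² - 1) / (t⁴ - t² - 1)` decreases, so the `t_n` decrease strictly to `√φ`, and
`√φ + √φ⁻¹ = √(2 + √5)`.
-/

open scoped Classical

/-- The graph `D_n`: a cycle on the `n + 1` vertices `0, 1, …, n`, together with
an extra pendant vertex `n + 1` joined to the cycle vertex `0`. -/
def Dgraph (n : ℕ) : SimpleGraph (Fin (n + 2)) :=
  SimpleGraph.fromRel (fun a b =>
    (a.val + 1 = b.val ∧ b.val ≤ n) ∨
    (a.val = 0 ∧ b.val = n) ∨
    (a.val = 0 ∧ b.val = n + 1))

open Matrix Real Filter Topology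
open scoped goldenRatio

theorem Matrix.abs_le_of_mulVec_eq_smul {ι : Type*} [Fintype ι] {A : Matrix ι ι ℝ}
    (hA : ∀ i j, 0 ≤ A i j) {v : ι → ℝ} (hv : ∀ i, 0 < v i) {l : ℝ} (hl : v ᵥ* A = l • v)
    {w : ι → ℝ} (hw : w ≠ 0) {μ : ℝ} (hμ : A *ᵥ w = μ • w) : |μ| ≤ l := by
  set a : ι → ℝ := fun i => |w i|
  have ha_pos : 0 < v ⬝ᵥ a := by
    obtain ⟨i, hi⟩ := Function.ne_iff.1 hw
    exact Finset.sum_pos' (fun j _ => mul_nonneg (hv j).le (abs_nonneg _))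
      ⟨i, Finset.mem_univ _, mul_pos (hv i) (abs_pos.2 hi)⟩
  have ha_le : |μ| • a ≤ A *ᵥ a := fun i => by
    calc |μ| * |w i| = |(A *ᵥ w) i| := by rw [hμ, Pi.smul_apply, smul_eq_mul, abs_mul]
      _ ≤ ∑ j, |A i j * w j| := Finset.abs_sum_le_sum_abs _ _
      _ = (A *ᵥ a) i := by simp only [abs_mul, abs_of_nonneg (hA _ _)]; rfl
  have : |μ| * (v ⬝ᵥ a) ≤ l * (v ⬝ᵥ a) :=
    calc |μ| * (v ⬝ᵥ a) = v ⬝ᵥ (|μ| • a) := by rw [dotProduct_smul, smul_eq_mul]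
      _ ≤ v ⬝ᵥ (A *ᵥ a) := dotProduct_le_dotProduct_of_nonneg_left ha_le fun i => (hv i).le
      _ = l * (v ⬝ᵥ a) := by rw [dotProduct_mulVec, hl, smul_dotProduct, smul_eq_mul]
  exact le_of_mul_le_mul_right this ha_pos

theorem specRad_eq_of_pos_eigenvector {V : Type*} [Fintype V] [Nonempty V] (G : SimpleGraph V)
    {l : ℝ} {v : V → ℝ} (hv : ∀ i, 0 < v i) (hl : adjMat G *ᵥ v = l • v) :
    specRad G = l := by
  have hA : adjMat G = G.adjMatrix ℝ := rfl
  refine IsGreatest.csSup_eq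
    ⟨⟨v, fun h => (hv (Classical.arbitrary V)).ne' (congrFun h _), hl⟩, ?_⟩
  rintro μ ⟨w, hw, hμ⟩
  refine (le_abs_self μ).trans (Matrix.abs_le_of_mulVec_eq_smul (fun i j => ?_) hv ?_ hw hμ)
  · unfold adjMat; split_ifs <;> norm_num
  · rw [← Matrix.mulVec_transpose, hA, SimpleGraph.transpose_adjMatrix, ← hA, hl]

theorem Dgraph_adj {n : ℕ} {a b : Fin (n + 2)} :
    (Dgraph n).Adj a b ↔ (a : ℕ) ≠ b ∧
      ((a + 1 = (b : ℕ) ∧ (b : ℕ) ≤ n) ∨ (b + 1 = (a : ℕ) ∧ (a : ℕ) ≤ n) ∨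
       ((a : ℕ) = 0 ∧ (b : ℕ) = n) ∨ ((b : ℕ) = 0 ∧ (a : ℕ) = n) ∨
       ((a : ℕ) = 0 ∧ (b : ℕ) = n + 1) ∨ ((b : ℕ) = 0 ∧ (a : ℕ) = n + 1)) := by
  simp only [Dgraph, SimpleGraph.fromRel_adj, ne_eq, Fin.ext_iff]
  tauto

theorem adjMat_Dgraph_mulVec_apply {n : ℕ} (F : ℕ → ℝ) (i : Fin (n + 2)) :
    (adjMat (Dgraph n) *ᵥ fun j => F j) i =
      ∑ k ∈ (Finset.range (n + 2)).filter (fun k => (i : ℕ) ≠ k ∧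
        ((i + 1 = k ∧ k ≤ n) ∨ (k + 1 = (i : ℕ) ∧ (i : ℕ) ≤ n) ∨
         ((i : ℕ) = 0 ∧ k = n) ∨ (k = 0 ∧ (i : ℕ) = n) ∨
         ((i : ℕ) = 0 ∧ k = n + 1) ∨ (k = 0 ∧ (i : ℕ) = n + 1))), F k := by
  rw [Finset.sum_filter, ← Fin.sum_univ_eq_sum_range]
  simp only [mulVec, dotProduct, adjMat, Dgraph_adj, ite_mul, one_mul, zero_mul]

def pendantCycleVec (n : ℕ) (c : ℕ → ℝ) (p : ℝ) : ℕ → ℝ :=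
  fun j => if j ≤ n then c j else p

theorem adjMat_Dgraph_mulVec {n : ℕ} (hn : 2 ≤ n) {c : ℕ → ℝ} {p μ : ℝ}
    (hwrap : c (n + 1) = c 0) (hcycle : ∀ i < n, c i + c (i + 2) = μ * c (i + 1))
    (hhub : c 1 + c n + p = μ * c 0) (hpendant : c 0 = μ * p) :
    (adjMat (Dgraph n) *ᵥ fun j => pendantCycleVec n c p j) =
      μ • fun j : Fin (n + 2) => pendantCycleVec n c p j := by
  funext i
  rw [adjMat_Dgraph_mulVec_apply, Pi.smul_apply, smul_eq_mul]
  obtain ⟨i, hi⟩ := i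
  simp only
  rcases i with _ | k
  · rw [show (Finset.range (n + 2)).filter _ = {1, n, n + 1} by ext; simp; omega]
    rw [Finset.sum_insert (by simp; omega), Finset.sum_pair (by omega)]
    simp only [pendantCycleVec, if_pos (by omega : 1 ≤ n), le_refl, if_true,
      if_neg (by omega : ¬n + 1 ≤ n), zero_le]
    rw [← add_assoc, hhub]
  rcases (by omega : k = n ∨ k + 1 = n ∨ k + 1 < n) with rfl | rfl | hk
  · rw [show (Finset.range (k + 2)).filter _ = {0} by ext; simp; omega]
    simp only [Finset.sum_singleton, pendantCycleVec, zero_le, if_true,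
      if_neg (by omega : ¬k + 1 ≤ k)]
    exact hpendant
  · rw [show (Finset.range (k + 1 + 2)).filter _ = {k, 0} by ext; simp; omega]
    rw [Finset.sum_pair (by omega)]
    simp only [pendantCycleVec, zero_le, le_refl, if_true, if_pos (by omega : k ≤ k + 1)]
    rw [← hwrap]
    exact hcycle k (by omega)
  · rw [show (Finset.range (n + 2)).filter _ = {k, k + 2} by ext; simp; omega]
    rw [Finset.sum_pair (by omega)]
    simp only [pendantCycleVec, if_pos (by omega : k ≤ n), if_pos (by omega : k + 2 ≤ n),
      if_pos hk.le]
    exact hcycle k (by omega)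

theorem specRad_Dgraph {n : ℕ} (hn : 2 ≤ n) {t : ℝ} (ht : 0 < t)
    (hroot : t ^ (n + 1) * (t ^ 4 - t ^ 2 - 1) = t ^ 4 + t ^ 2 - 1) :
    specRad (Dgraph n) = t + t⁻¹ := by
  set c : ℕ → ℝ := fun k => t ^ k + t ^ (n + 1 - k)
  set p : ℝ := (1 + t ^ (n + 1)) / (t + t⁻¹)
  refine specRad_eq_of_pos_eigenvector _ (fun i => ?_)
    (adjMat_Dgraph_mulVec (c := c) (p := p) hn ?_ ?_ ?_ ?_)
  · unfold pendantCycleVec; split_ifs <;> positivity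
  · simp [c, add_comm]
  · intro i hi
    obtain ⟨m, rfl⟩ : ∃ m, n = i + m + 1 := ⟨n - i - 1, by omega⟩
    simp only [c, show i + m + 1 + 1 - i = m + 2 by omega,
      show i + m + 1 + 1 - (i + 2) = m by omega, show i + m + 1 + 1 - (i + 1) = m + 1 by omega]
    field_simp
    ring
  · obtain ⟨m, rfl⟩ : ∃ m, n = m + 1 := ⟨n - 1, by omega⟩
    simp only [c, p, Nat.sub_zero, pow_zero, show m + 1 + 1 - 1 = m + 1 by omega,
      show m + 1 + 1 - (m + 1) = 1 by omega, pow_one]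
    field_simp
    linear_combination -hroot
  · simp only [c, p, Nat.sub_zero, pow_zero]
    field_simp

theorem one_lt_sqrt_goldenRatio : 1 < √φ := by
  rw [lt_sqrt zero_le_one, one_pow]; exact one_lt_goldenRatio

theorem quartic_pos_of_sqrt_goldenRatio_lt {t : ℝ} (ht : √φ < t) : 0 < t ^ 4 - t ^ 2 - 1 := by
  have hφ : φ < t ^ 2 := by
    rw [← sq_sqrt goldenRatio_pos.le]; exact pow_lt_pow_left₀ ht (sqrt_nonneg φ) two_ne_zero
  have hfactor : t ^ 4 - t ^ 2 - 1 = (t ^ 2 - φ) * (t ^ 2 - ψ) := by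
    linear_combination (t ^ 2) * goldenRatio_add_goldenConj - goldenRatio_mul_goldenConj
  rw [hfactor]
  exact mul_pos (by linarith) (by nlinarith [goldenConj_neg])

theorem lt_of_pow_mul_quartic_eq {k : ℕ} {a b : ℝ} (ha : √φ < a) (hb : √φ < b)
    (hroot : a ^ k * (a ^ 4 - a ^ 2 - 1) = a ^ 4 + a ^ 2 - 1)
    (hb_above : b ^ 4 + b ^ 2 - 1 < b ^ k * (b ^ 4 - b ^ 2 - 1)) : a < b := by
  by_contra! hba
  have hPa := quartic_pos_of_sqrt_goldenRatio_lt ha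
  have hPb := quartic_pos_of_sqrt_goldenRatio_lt hb
  have hb0 : 0 ≤ b := (sqrt_nonneg φ).trans hb.le
  have hpow : b ^ k ≤ a ^ k := pow_le_pow_left₀ hb0 hba k
  have hsq : b ^ 2 ≤ a ^ 2 := pow_le_pow_left₀ hb0 hba 2
  have hlt :
      (b ^ 4 + b ^ 2 - 1) * (a ^ 4 - a ^ 2 - 1) < (a ^ 4 + a ^ 2 - 1) * (b ^ 4 - b ^ 2 - 1) :=
    calc (b ^ 4 + b ^ 2 - 1) * (a ^ 4 - a ^ 2 - 1)
        < b ^ k * (b ^ 4 - b ^ 2 - 1) * (a ^ 4 - a ^ 2 - 1) :=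
          mul_lt_mul_of_pos_right hb_above hPa
      _ ≤ a ^ k * (b ^ 4 - b ^ 2 - 1) * (a ^ 4 - a ^ 2 - 1) := by gcongr
      _ = (a ^ 4 + a ^ 2 - 1) * (b ^ 4 - b ^ 2 - 1) := by rw [← hroot]; ring
  have hdiff :
      (b ^ 4 + b ^ 2 - 1) * (a ^ 4 - a ^ 2 - 1) - (a ^ 4 + a ^ 2 - 1) * (b ^ 4 - b ^ 2 - 1) =
        2 * (a ^ 2 - b ^ 2) * (a ^ 2 * b ^ 2 + 1) := by ring
  have : 0 ≤ 2 * (a ^ 2 - b ^ 2) * (a ^ 2 * b ^ 2 + 1) := by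
    have := sub_nonneg.2 hsq
    positivity
  linarith

theorem exists_pow_mul_quartic_eq {k : ℕ} (hk : k ≠ 0) :
    ∃ t, √φ < t ∧ t ^ k * (t ^ 4 - t ^ 2 - 1) = t ^ 4 + t ^ 2 - 1 := by
  set g : ℝ → ℝ := fun t => t ^ k * (t ^ 4 - t ^ 2 - 1) - (t ^ 4 + t ^ 2 - 1)
  have hφ : √φ ^ 2 = φ := sq_sqrt goldenRatio_pos.le
  have hφ4 : √φ ^ 4 = φ + 1 := by rw [show 4 = 2 * 2 by rfl, pow_mul, hφ, goldenRatio_sq]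
  have hg_left : g √φ < 0 := by
    simp only [g, hφ4, hφ]
    linarith [goldenRatio_pos]
  have hg_right : 0 < g 2 := by
    have : (2 : ℝ) ≤ 2 ^ k := le_self_pow₀ one_le_two hk
    simp only [g]
    nlinarith
  have hsqrt_lt : √φ < 2 := by
    rw [sqrt_lt' two_pos]; linarith [goldenRatio_lt_two]
  obtain ⟨t, ht, hgt⟩ := intermediate_value_Ioo hsqrt_lt.le (by fun_prop) ⟨hg_left, hg_right⟩
  exact ⟨t, ht.1, sub_eq_zero.1 hgt⟩

-- `pendantCycleRoot n` is the root `t_(n+2)` belonging to `D_(n+2)`, so the exponent is `n + 3`.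
noncomputable def pendantCycleRoot (n : ℕ) : ℝ :=
  Classical.choose (exists_pow_mul_quartic_eq (k := n + 3) (by omega))

theorem sqrt_goldenRatio_lt_pendantCycleRoot (n : ℕ) : √φ < pendantCycleRoot n :=
  (Classical.choose_spec (exists_pow_mul_quartic_eq (k := n + 3) (by omega))).1

theorem pendantCycleRoot_spec (n : ℕ) :
    pendantCycleRoot n ^ (n + 3) * (pendantCycleRoot n ^ 4 - pendantCycleRoot n ^ 2 - 1) =
      pendantCycleRoot n ^ 4 + pendantCycleRoot n ^ 2 - 1 :=
  (Classical.choose_spec (exists_pow_mul_quartic_eq (k := n + 3) (by omega))).2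

theorem one_lt_pendantCycleRoot (n : ℕ) : 1 < pendantCycleRoot n :=
  one_lt_sqrt_goldenRatio.trans (sqrt_goldenRatio_lt_pendantCycleRoot n)

theorem strictAnti_pendantCycleRoot : StrictAnti pendantCycleRoot := by
  refine strictAnti_nat_of_succ_lt fun n => ?_
  set b := pendantCycleRoot n
  refine lt_of_pow_mul_quartic_eq (k := n + 4) (sqrt_goldenRatio_lt_pendantCycleRoot _)
    (sqrt_goldenRatio_lt_pendantCycleRoot n) (pendantCycleRoot_spec (n + 1)) ?_
  have hb := one_lt_pendantCycleRoot n
  have hQ : 0 < b ^ 4 + b ^ 2 - 1 := by nlinarith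
  calc b ^ 4 + b ^ 2 - 1 < b * (b ^ 4 + b ^ 2 - 1) := lt_mul_left hQ hb
    _ = b ^ (n + 4) * (b ^ 4 - b ^ 2 - 1) := by rw [← pendantCycleRoot_spec n]; ring

theorem tendsto_pendantCycleRoot : Tendsto pendantCycleRoot atTop (𝓝 √φ) := by
  refine tendsto_order.2 ⟨fun a ha => .of_forall fun n =>
    ha.trans (sqrt_goldenRatio_lt_pendantCycleRoot n), fun u hu => ?_⟩
  have hu1 : 1 < u := one_lt_sqrt_goldenRatio.trans hu
  have hP := quartic_pos_of_sqrt_goldenRatio_lt hu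
  have hpow : Tendsto (fun n : ℕ => u ^ (n + 3) * (u ^ 4 - u ^ 2 - 1)) atTop atTop :=
    ((tendsto_pow_atTop_atTop_of_one_lt hu1).comp (tendsto_add_atTop_nat 3)).atTop_mul_const hP
  filter_upwards [hpow.eventually_gt_atTop (u ^ 4 + u ^ 2 - 1)] with n hn
  exact lt_of_pow_mul_quartic_eq (sqrt_goldenRatio_lt_pendantCycleRoot n) hu
    (pendantCycleRoot_spec n) hn

theorem add_inv_lt_add_inv {a b : ℝ} (ha : 1 ≤ a) (hab : a < b) : a + a⁻¹ < b + b⁻¹ := by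
  have ha0 : 0 < a := by linarith
  have hb0 : 0 < b := by linarith
  have hab1 : 1 < a * b := by nlinarith
  rw [← sub_pos]
  have : b + b⁻¹ - (a + a⁻¹) = (b - a) * (a * b - 1) / (a * b) := by field_simp; ring
  rw [this]
  exact div_pos (mul_pos (by linarith) (by linarith)) (by positivity)

theorem sqrt_goldenRatio_add_inv : √φ + (√φ)⁻¹ = lambdaStar := by
  have hφ : √φ ^ 2 = φ := sq_sqrt goldenRatio_pos.le
  refine ((sqrt_eq_iff_mul_self_eq_of_pos (by positivity)).2 ?_).symm
  have hinv : φ⁻¹ = φ - 1 := by rw [inv_goldenRatio]; linarith [goldenRatio_add_goldenConj]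
  calc (√φ + (√φ)⁻¹) * (√φ + (√φ)⁻¹) = √φ ^ 2 + 2 + (√φ ^ 2)⁻¹ := by field_simp; ring
    _ = 2 + √5 := by rw [hφ, hinv, goldenRatio]; ring

theorem stmt19 :
    StrictAnti (fun n : ℕ => specRad (Dgraph (n + 2))) ∧
    Filter.Tendsto (fun n : ℕ => specRad (Dgraph (n + 2))) Filter.atTop
      (nhds lambdaStar) := by
  have hspec : (fun n : ℕ => specRad (Dgraph (n + 2))) =
      fun n => pendantCycleRoot n + (pendantCycleRoot n)⁻¹ :=
    funext fun n => specRad_Dgraph (by omega) (by linarith [one_lt_pendantCycleRoot n])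
      (pendantCycleRoot_spec n)
  rw [hspec, ← sqrt_goldenRatio_add_inv]
  refine ⟨fun m n hmn => add_inv_lt_add_inv (one_lt_pendantCycleRoot n).le
    (strictAnti_pendantCycleRoot hmn), ?_⟩
  exact tendsto_pendantCycleRoot.add
    (tendsto_pendantCycleRoot.inv₀ (sqrt_pos.2 goldenRatio_pos).ne')
end
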